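/- arXiv:1605.07239 — 11 statements merged into one kernel-verified Lean document; each statement's English description precedes it below -/
import Mathlib

section
/- Let A be an n×n real symmetric matrix with entries a_{ij}. For every real x ≤ 0 and every eigenvalue λ of A, one has λ ≤ max_{1≤i≤n} D_i(A,x), where D_i(A,x) = a_{ii} − x + Σ_{j≠i} |a_{ij} − x|. In particular λ_max(A) ≤ inf_{x≤0} max_i D_i(A,x) (the shifted Gershgorin upper bound). -/
/-- The shifted Gershgorin row function D_i(A,x) = a_{ii} − x + Σ_{j≠i} |a_{ij} − x|. -/
noncomputable def gershUpper (n : ℕ) (A : Matrix (Fin n) (Fin n) ℝ) (x : ℝ) (i : Fin n) : ℝ :=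
  A i i - x + ∑ j ∈ Finset.univ.erase i, |A i j - x|

/-!
If `A v = μ v` with `v ≠ 0` and `J` is the all-ones matrix, then
`μ ‖v‖² = vᵀ (A - x J) v + x (∑ vᵢ)²`, and the last term is `≤ 0` for `x ≤ 0`.
For the symmetric matrix `B = A - x J`, the estimate `2 bᵢⱼ vᵢ vⱼ ≤ |bᵢⱼ| (vᵢ² + vⱼ²)`
summed over `i ≠ j` gives `vᵀ B v ≤ ∑ᵢ Dᵢ(A, x) vᵢ² ≤ (maxᵢ Dᵢ(A, x)) ‖v‖²`.
-/

open Finset Matrix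

section

variable {ι : Type*} [Fintype ι]

theorem sum_sum_mul_mul_le_sum_sum_mul_sq {c : ι → ι → ℝ} (hc : ∀ i j, c j i = c i j)
    (hc₀ : ∀ i j, 0 ≤ c i j) (a : ι → ℝ) :
    ∑ i, ∑ j, c i j * (a i * a j) ≤ ∑ i, ∑ j, c i j * a i ^ 2 := by
  have hswap : ∑ i, ∑ j, c i j * a j ^ 2 = ∑ i, ∑ j, c i j * a i ^ 2 := by
    rw [sum_comm]; simp only [hc]
  have hsq : 0 ≤ ∑ i, ∑ j, c i j * (a i - a j) ^ 2 :=
    sum_nonneg fun i _ => sum_nonneg fun j _ => mul_nonneg (hc₀ i j) (sq_nonneg _)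
  have hexpand : ∑ i, ∑ j, c i j * (a i - a j) ^ 2 =
      ∑ i, ∑ j, c i j * a i ^ 2 + ∑ i, ∑ j, c i j * a j ^ 2
        - 2 * ∑ i, ∑ j, c i j * (a i * a j) := by
    simp only [mul_sum, ← sum_add_distrib, ← sum_sub_distrib]
    exact sum_congr rfl fun i _ => sum_congr rfl fun j _ => by ring
  linarith

theorem sum_sum_erase_mul_mul_le [DecidableEq ι] {c : ι → ι → ℝ} (hc : ∀ i j, c j i = c i j)
    (hc₀ : ∀ i j, 0 ≤ c i j) (a : ι → ℝ) :
    ∑ i, ∑ j ∈ univ.erase i, c i j * (a i * a j) ≤ ∑ i, ∑ j ∈ univ.erase i, c i j * a i ^ 2 := by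
  have h := sum_sum_mul_mul_le_sum_sum_mul_sq hc hc₀ a
  have split_diag (f : ι → ι → ℝ) :
      ∑ i, ∑ j, f i j = ∑ i, f i i + ∑ i, ∑ j ∈ univ.erase i, f i j := by
    rw [← sum_add_distrib]
    exact sum_congr rfl fun i _ => (add_sum_erase _ _ (mem_univ i)).symm
  rw [split_diag, split_diag] at h
  simp only [← sq] at h
  exact le_of_add_le_add_left h

theorem dotProduct_mulVec_le_sum_gershgorin [DecidableEq ι] {B : Matrix ι ι ℝ} (hB : B.IsSymm)
    (v : ι → ℝ) :
    v ⬝ᵥ B *ᵥ v ≤ ∑ i, (B i i + ∑ j ∈ univ.erase i, |B i j|) * v i ^ 2 := by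
  have hsymm : ∀ i j, |B j i| = |B i j| := fun i j => by rw [hB.apply]
  calc v ⬝ᵥ B *ᵥ v = ∑ i, (B i i * v i ^ 2 + ∑ j ∈ univ.erase i, B i j * (v i * v j)) := by
        simp only [dotProduct, mulVec, mul_sum]
        refine sum_congr rfl fun i _ => ?_
        rw [← add_sum_erase _ _ (mem_univ i)]
        simp only [sq, mul_left_comm]
    _ ≤ ∑ i, (B i i * v i ^ 2 + ∑ j ∈ univ.erase i, |B i j| * (|v i| * |v j|)) := by
        refine sum_le_sum fun i _ => add_le_add_right (sum_le_sum fun j _ => ?_) _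
        rw [← abs_mul, ← abs_mul]
        exact le_abs_self _
    _ ≤ ∑ i, (B i i * v i ^ 2 + ∑ j ∈ univ.erase i, |B i j| * |v i| ^ 2) := by
        simp only [sum_add_distrib]
        exact add_le_add_right (sum_sum_erase_mul_mul_le hsymm (fun _ _ => abs_nonneg _) _) _
    _ = ∑ i, (B i i + ∑ j ∈ univ.erase i, |B i j|) * v i ^ 2 := by
        simp only [sq_abs, add_mul, sum_mul]

theorem exists_mulVec_eq_smul_of_mem_spectrum {K : Type*} [Field K] [DecidableEq ι]
    {A : Matrix ι ι K} {μ : K} (hμ : μ ∈ spectrum K A) : ∃ v ≠ 0, A *ᵥ v = μ • v := by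
  rw [← spectrum_toLin', ← Module.End.hasEigenvalue_iff_mem_spectrum] at hμ
  obtain ⟨v, hv, hv0⟩ := hμ.exists_hasEigenvector
  exact ⟨v, hv0, by simpa using Module.End.mem_eigenspace_iff.1 hv⟩

theorem le_iSup_of_mem_spectrum_of_dotProduct_mulVec_le [DecidableEq ι] {A : Matrix ι ι ℝ}
    {d : ι → ℝ} (hd : ∀ v, v ⬝ᵥ A *ᵥ v ≤ ∑ i, d i * v i ^ 2) {μ : ℝ} (hμ : μ ∈ spectrum ℝ A) :
    μ ≤ ⨆ i, d i := by
  obtain ⟨v, hv0, hAv⟩ := exists_mulVec_eq_smul_of_mem_spectrum hμ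
  have hpos : 0 < v ⬝ᵥ v := by simpa using dotProduct_self_star_pos_iff.2 hv0
  refine le_of_mul_le_mul_right ?_ hpos
  calc μ * (v ⬝ᵥ v) = v ⬝ᵥ A *ᵥ v := by rw [hAv, dotProduct_smul, smul_eq_mul]
    _ ≤ ∑ i, d i * v i ^ 2 := hd v
    _ ≤ ∑ i, (⨆ i, d i) * v i ^ 2 := by
        gcongr with i
        exact le_ciSup (Set.finite_range d).bddAbove i
    _ = (⨆ i, d i) * (v ⬝ᵥ v) := by simp only [dotProduct, mul_sum, sq]

end

theorem dotProduct_mulVec_le_sum_gershUpper {n : ℕ} {A : Matrix (Fin n) (Fin n) ℝ}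
    (hA : A.IsSymm) {x : ℝ} (hx : x ≤ 0) (v : Fin n → ℝ) :
    v ⬝ᵥ A *ᵥ v ≤ ∑ i, gershUpper n A x i * v i ^ 2 := by
  set B : Matrix (Fin n) (Fin n) ℝ := of fun i j => A i j - x
  have hB : B.IsSymm := IsSymm.ext fun i j => by simp [B, hA.apply]
  have hshift : v ⬝ᵥ A *ᵥ v = v ⬝ᵥ B *ᵥ v + x * (∑ i, v i) ^ 2 := by
    rw [sq, sum_mul_sum]
    simp only [B, dotProduct, mulVec, of_apply, mul_sum, ← sum_add_distrib]
    exact sum_congr rfl fun i _ => sum_congr rfl fun j _ => by ring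
  calc v ⬝ᵥ A *ᵥ v ≤ v ⬝ᵥ B *ᵥ v := by
        rw [hshift]
        exact add_le_of_nonpos_right (mul_nonpos_of_nonpos_of_nonneg hx (sq_nonneg _))
    _ ≤ ∑ i, gershUpper n A x i * v i ^ 2 := dotProduct_mulVec_le_sum_gershgorin hB v

theorem shifted_gershgorin_upper_general (n : ℕ)
    (A : Matrix (Fin n) (Fin n) ℝ) (hA : A.IsHermitian) :
    (∀ x : ℝ, x ≤ 0 → ∀ μ ∈ spectrum ℝ A, μ ≤ ⨆ i, gershUpper n A x i) ∧
    (⨆ i, hA.eigenvalues i) ≤ ⨅ x : {x : ℝ // x ≤ 0}, ⨆ i, gershUpper n A x.1 i := by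
  have eigenvalue_le (x : ℝ) (hx : x ≤ 0) (μ : ℝ) (hμ : μ ∈ spectrum ℝ A) :
      μ ≤ ⨆ i, gershUpper n A x i :=
    le_iSup_of_mem_spectrum_of_dotProduct_mulVec_le
      (dotProduct_mulVec_le_sum_gershUpper (isHermitian_iff_isSymm.1 hA) hx) hμ
  refine ⟨eigenvalue_le, ?_⟩
  rcases isEmpty_or_nonempty (Fin n) with _ | _
  · -- both sides are the junk value `sSup ∅ = 0`
    simp [Real.iSup_of_isEmpty]
  · have : Nonempty {x : ℝ // x ≤ 0} := ⟨⟨0, le_rfl⟩⟩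
    exact le_ciInf fun x => ciSup_le fun i =>
      eigenvalue_le x.1 x.2 _ (hA.eigenvalues_mem_spectrum_real i)

/-- For every x ≤ 0, every eigenvalue of a real symmetric matrix A is at most
max_i D_i(A,x); in particular λ_max(A) ≤ inf_{x ≤ 0} max_i D_i(A,x). -/
theorem shifted_gershgorin_upper (n : ℕ) (hn : 0 < n)
    (A : Matrix (Fin n) (Fin n) ℝ) (hA : A.IsHermitian) :
    (∀ x : ℝ, x ≤ 0 → ∀ μ ∈ spectrum ℝ A, μ ≤ ⨆ i, gershUpper n A x i) ∧
    (⨆ i, hA.eigenvalues i) ≤ ⨅ x : {x : ℝ // x ≤ 0}, ⨆ i, gershUpper n A x.1 i :=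
  shifted_gershgorin_upper_general n A hA
end

section
/- Let A be an n×n real symmetric matrix. Then for every real x, min_{1≤i≤n} d_i(A,x) = min_{1≤k≤n} (r_k x + s_k) and max_{1≤i≤n} D_i(A,x) = max_{1≤k≤n} (R_k x + S_k). In other words, the lower (resp. upper) shifted Gershgorin bounding function is a single piecewise-linear function cut out by the n lines x ↦ r_k x + s_k (resp. x ↦ R_k x + S_k). -/
/-- The shifted Gershgorin row function d_i(A,x) = a_{ii} − x − Σ_{j≠i} |a_{ij} − x|. -/
noncomputable def gershLower (n : ℕ) (A : Matrix (Fin n) (Fin n) ℝ) (x : ℝ) (i : Fin n) : ℝ :=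
  A i i - x - ∑ j ∈ Finset.univ.erase i, |A i j - x|

/-- `δ_{i,k} = Σ_{j<k} y_j − Σ_{j≥k} y_j` for the sorted off-diagonal entries `y i` of
row `i` (here `k : Fin n` has paper index `k+1`). -/
noncomputable def deltaIK (n : ℕ) (y : Fin n → Fin (n - 1) → ℝ) (i : Fin n) (k : Fin n) : ℝ :=
  (∑ j ∈ Finset.univ.filter (fun j : Fin (n - 1) => (j : ℕ) < (k : ℕ)), y i j) -
  (∑ j ∈ Finset.univ.filter (fun j : Fin (n - 1) => (k : ℕ) ≤ (j : ℕ)), y i j)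

/-!
For a monotone `g : Fin m → ℝ`, the convex piecewise-linear function `x ↦ ∑ j, |g j - x|` is
the maximum of the affine pieces `∑_{j<c} (x - g j) + ∑_{j≥c} (g j - x)`, `c = 0, …, m`: each
piece is a termwise lower bound, and `c = #{j | g j < x}` attains it because, `g` being sorted,
the entries below `x` are exactly the first `c`. Expanding the pieces row by row gives
`d_i(A,x) = min_k (r_k x + s_{i,k})` and `D_i(A,x) = max_k (R_k x + S_{i,k})`, and the theorem
follows by exchanging the extremum over `i` with the one over `k`.
-/

open Finset

theorem Finite.ciInf_comm {α ι κ : Type*} [ConditionallyCompleteLattice α] [Finite ι] [Finite κ]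
    (f : ι → κ → α) : ⨅ i, ⨅ k, f i k = ⨅ k, ⨅ i, f i k := by
  rw [← Finite.ciInf_prod (fun p : ι × κ => f p.1 p.2),
    ← Finite.ciInf_prod (fun p : κ × ι => f p.2 p.1), ← (Equiv.prodComm ι κ).iInf_comp]
  rfl

theorem Finite.ciSup_comm {α ι κ : Type*} [ConditionallyCompleteLattice α] [Finite ι] [Finite κ]
    (f : ι → κ → α) : ⨆ i, ⨆ k, f i k = ⨆ k, ⨆ i, f i k :=
  Finite.ciInf_comm (α := αᵒᵈ) f

section SumAbsSub

variable {m : ℕ} (g : Fin m → ℝ) (x : ℝ)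

def sumAbsSubPiece (c : ℕ) : ℝ :=
  ∑ j : Fin m, if (j : ℕ) < c then x - g j else g j - x

theorem sumAbsSubPiece_le_sum_abs_sub (c : ℕ) : sumAbsSubPiece g x c ≤ ∑ j, |g j - x| := by
  refine sum_le_sum fun j _ => ?_
  split_ifs
  · exact abs_sub_comm x (g j) ▸ le_abs_self _
  · exact le_abs_self _

theorem Monotone.sumAbsSubPiece_card_eq (hg : Monotone g) :
    sumAbsSubPiece g x #{j | g j < x} = ∑ j, |g j - x| := by
  refine sum_congr rfl fun j _ => ?_
  have hdown : ∀ i j, j ≤ i → g i < x → g j < x := fun i j hji hi => (hg hji).trans_lt hi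
  split_ifs with hj <;> rw [Fin.lt_card_filter_univ_iff_apply_of_imp _ hdown] at hj
  · rw [abs_of_neg (sub_neg.2 hj), neg_sub]
  · rw [abs_of_nonneg (sub_nonneg.2 (not_lt.1 hj))]

theorem sumAbsSubPiece_eq {c : ℕ} (hc : c ≤ m) :
    sumAbsSubPiece g x c =
      (2 * c - m) * x - (∑ j ∈ univ.filter (fun j : Fin m => (j : ℕ) < c), g j -
        ∑ j ∈ univ.filter (fun j : Fin m => c ≤ (j : ℕ)), g j) := by
  have hlt : #{j : Fin m | (j : ℕ) < c} = c := by rw [Fin.card_filter_val_lt, min_eq_right hc]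
  have hge : #{j : Fin m | c ≤ (j : ℕ)} = m - c := by
    simp only [← not_lt, filter_not, card_sdiff_of_subset (filter_subset _ _), hlt, card_univ,
      Fintype.card_fin]
  rw [sumAbsSubPiece, sum_ite]
  simp only [not_lt, sum_sub_distrib, sum_const, hlt, hge, nsmul_eq_mul, Nat.cast_sub hc]
  ring

end SumAbsSub

theorem IsGreatest.ciInf_const_sub {ι α : Type*} [Nonempty ι] [AddCommGroup α]
    [ConditionallyCompleteLattice α] [IsOrderedAddMonoid α] {f : ι → α} {a : α}
    (h : IsGreatest (Set.range f) a) (c : α) : ⨅ i, (c - f i) = c - a := by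
  have h' := (show Antitone (c - ·) from fun _ _ hab => sub_le_sub_left hab c).map_isGreatest h
  rw [← Set.range_comp] at h'
  exact h'.isGLB.ciInf_eq

theorem Monotone.isGreatest_sumAbsSubPiece {n : ℕ} (hn : 0 < n) {g : Fin (n - 1) → ℝ}
    (hg : Monotone g) (x : ℝ) :
    IsGreatest (Set.range fun k : Fin n => sumAbsSubPiece g x k) (∑ j, |g j - x|) := by
  have hcard : #{j | g j < x} < n := by
    grw [card_filter_le, card_univ, Fintype.card_fin]
    omega
  exact ⟨⟨⟨_, hcard⟩, hg.sumAbsSubPiece_card_eq g x⟩,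
    Set.forall_mem_range.2 fun k => sumAbsSubPiece_le_sum_abs_sub g x k⟩

theorem Finset.sum_erase_eq_sum_equiv {ι κ M : Type*} [Fintype ι] [DecidableEq ι] [Fintype κ]
    [AddCommMonoid M] (i : ι) (e : κ ≃ {j // j ≠ i}) (f : ι → M) :
    ∑ j ∈ univ.erase i, f j = ∑ k, f (e k) :=
  (sum_subtype _ (fun _ => mem_erase.trans (and_iff_left (mem_univ _))) f).trans
    (Fintype.sum_equiv e.symm _ _ fun _ => by rw [Equiv.apply_symm_apply])

theorem sumAbsSubPiece_eq_deltaIK {n : ℕ} (y : Fin n → Fin (n - 1) → ℝ) (x : ℝ) (i k : Fin n) :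
    sumAbsSubPiece (y i) x k = (2 * ((k : ℕ) + 1) - n - 1) * x - deltaIK n y i k := by
  rw [sumAbsSubPiece_eq _ _ (Nat.le_sub_one_of_lt k.isLt), Nat.cast_pred k.pos, deltaIK]
  ring

section Row

variable {n : ℕ} {A : Matrix (Fin n) (Fin n) ℝ} {y : Fin n → Fin (n - 1) → ℝ}
  {e : ∀ i : Fin n, Fin (n - 1) ≃ {j : Fin n // j ≠ i}}

theorem sum_erase_abs_sub_eq (hy : ∀ i k, y i k = A i (e i k).1) (x : ℝ) (i : Fin n) :
    ∑ j ∈ univ.erase i, |A i j - x| = ∑ k, |y i k - x| := by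
  simp only [sum_erase_eq_sum_equiv i (e i), hy]

theorem gershLower_eq_iInf (hy : ∀ i k, y i k = A i (e i k).1) (hmono : ∀ i, Monotone (y i))
    (x : ℝ) (i : Fin n) :
    gershLower n A x i =
      ⨅ k : Fin n, (((n : ℝ) - 2 * ((k : ℕ) + 1)) * x + (A i i + deltaIK n y i k)) := by
  have : Nonempty (Fin n) := ⟨i⟩
  rw [gershLower, sum_erase_abs_sub_eq hy,
    ← ((hmono i).isGreatest_sumAbsSubPiece i.pos x).ciInf_const_sub]
  refine iInf_congr fun k => ?_
  rw [sumAbsSubPiece_eq_deltaIK]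
  ring

theorem gershUpper_eq_iSup (hy : ∀ i k, y i k = A i (e i k).1) (hmono : ∀ i, Monotone (y i))
    (x : ℝ) (i : Fin n) :
    gershUpper n A x i =
      ⨆ k : Fin n, ((2 * ((k : ℕ) + 1) - (n : ℝ) - 2) * x + (A i i - deltaIK n y i k)) := by
  have : Nonempty (Fin n) := ⟨i⟩
  have h := (hmono i).isGreatest_sumAbsSubPiece i.pos x
  rw [gershUpper, sum_erase_abs_sub_eq hy, ← h.isLUB.ciSup_eq, add_ciSup h.bddAbove]
  refine iSup_congr fun k => ?_
  rw [sumAbsSubPiece_eq_deltaIK]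
  ring

end Row

theorem shifted_gershgorin_global_bounds_general (n : ℕ)
    (A : Matrix (Fin n) (Fin n) ℝ)
    (y : Fin n → Fin (n - 1) → ℝ) (e : ∀ i : Fin n, Fin (n - 1) ≃ {j : Fin n // j ≠ i})
    (hy : ∀ i k, y i k = A i (e i k).1) (hmono : ∀ i, Monotone (y i)) (x : ℝ) :
    (⨅ i, gershLower n A x i) =
      (⨅ k : Fin n, (((n : ℝ) - 2 * ((k : ℕ) + 1)) * x +
        ⨅ i : Fin n, (A i i + deltaIK n y i k))) ∧
    (⨆ i, gershUpper n A x i) =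
      (⨆ k : Fin n, ((2 * ((k : ℕ) + 1) - (n : ℝ) - 2) * x +
        ⨆ i : Fin n, (A i i - deltaIK n y i k))) := by
  constructor
  · rw [iInf_congr (gershLower_eq_iInf hy hmono x), Finite.ciInf_comm]
    refine iInf_congr fun k => ?_
    have : Nonempty (Fin n) := ⟨k⟩
    exact (add_ciInf (Finite.bddBelow_range _) _).symm
  · rw [iSup_congr (gershUpper_eq_iSup hy hmono x), Finite.ciSup_comm]
    refine iSup_congr fun k => ?_
    have : Nonempty (Fin n) := ⟨k⟩
    exact (add_ciSup (Finite.bddAbove_range _) _).symm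

/-- Global-bounds part of the shifted Gershgorin theorem: with `y i` the sorted
off-diagonal entries of each row `i`, `s_{i,k} = a_{ii} + δ_{i,k}`, `S_{i,k} = a_{ii} − δ_{i,k}`,
`s_k = min_i s_{i,k}`, `S_k = max_i S_{i,k}`, `r_k = n − 2k` and `R_k = 2k − n − 2`
(paper index `k+1` for `k : Fin n`), one has for every real `x`:
`min_i d_i(A,x) = min_k (r_k x + s_k)` and `max_i D_i(A,x) = max_k (R_k x + S_k)`. -/
theorem shifted_gershgorin_global_bounds (n : ℕ) (hn : 0 < n)
    (A : Matrix (Fin n) (Fin n) ℝ) (hA : A.IsSymm)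
    (y : Fin n → Fin (n - 1) → ℝ) (e : ∀ i : Fin n, Fin (n - 1) ≃ {j : Fin n // j ≠ i})
    (hy : ∀ i k, y i k = A i (e i k).1) (hmono : ∀ i, Monotone (y i)) (x : ℝ) :
    (⨅ i, gershLower n A x i) =
      (⨅ k : Fin n, (((n : ℝ) - 2 * ((k : ℕ) + 1)) * x +
        ⨅ i : Fin n, (A i i + deltaIK n y i k))) ∧
    (⨆ i, gershUpper n A x i) =
      (⨆ k : Fin n, ((2 * ((k : ℕ) + 1) - (n : ℝ) - 2) * x +
        ⨆ i : Fin n, (A i i - deltaIK n y i k))) :=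
  shifted_gershgorin_global_bounds_general n A y e hy hmono x
end

section
/- Let A be an n×n real symmetric matrix with entries a_{ij}, and let I = {i : d_i(A,0) = min_j d_j(A,0)} be the set of rows attaining the unshifted Gershgorin lower bound. Then sup_{x≥0} min_i d_i(A,x) > min_i d_i(A,0) (i.e. shifting strictly improves the Gershgorin lower bound) if and only if for every i ∈ I the number of indices j ≠ i with a_{ij} > 0 is strictly greater than n/2. -/
open Finset Filter Topology

lemma abs_sub_ite_le_abs_sub {a x : ℝ} (hx : 0 ≤ x) :
    |a| - (if 0 < a then x else -x) ≤ |a - x| := by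
  split_ifs with ha
  · simpa [abs_of_nonneg hx] using abs_sub_abs_le_abs_sub a x
  · rw [abs_of_nonpos (not_lt.mp ha), abs_of_nonpos (by linarith)]
    linarith

lemma abs_sub_eq_abs_sub_ite {a x : ℝ} (hx : 0 ≤ x) (hxa : 0 < a → x ≤ a) :
    |a - x| = |a| - (if 0 < a then x else -x) := by
  split_ifs with ha
  · rw [abs_of_pos ha, abs_of_nonneg (sub_nonneg.mpr (hxa ha))]
  · rw [abs_of_nonpos (not_lt.mp ha), abs_of_nonpos (by linarith)]
    ring

variable {n : ℕ} (A : Matrix (Fin n) (Fin n) ℝ) (i : Fin n)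

noncomputable def posOffDiagCount : ℕ := Nat.card {j : Fin n // j ≠ i ∧ 0 < A i j}

lemma posOffDiagCount_eq_card_filter :
    posOffDiagCount A i = #{j ∈ univ.erase i | 0 < A i j} := by
  rw [posOffDiagCount, Nat.card_eq_fintype_card, Fintype.card_subtype]
  congr 1
  ext j
  simp

lemma sum_erase_ite_pos (x : ℝ) :
    ∑ j ∈ univ.erase i, (if 0 < A i j then x else -x) =
      (2 * posOffDiagCount A i - (n - 1 : ℝ)) * x := by
  have hcard := card_filter_add_card_filter_not (s := univ.erase i) (fun j => 0 < A i j)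
  rw [card_erase_of_mem (mem_univ i), card_univ, Fintype.card_fin] at hcard
  have hcardR : (#{j ∈ univ.erase i | 0 < A i j} : ℝ) + #{j ∈ univ.erase i | ¬ 0 < A i j}
      = n - 1 := by
    rw [← Nat.cast_add, hcard, Nat.cast_sub i.pos, Nat.cast_one]
  rw [sum_ite, sum_const, sum_const, nsmul_eq_mul, nsmul_eq_mul,
    posOffDiagCount_eq_card_filter]
  linear_combination (-x) * hcardR

variable {A i}

lemma gershLower_le_add_mul {x : ℝ} (hx : 0 ≤ x) :
    gershLower n A x i ≤ gershLower n A 0 i + (2 * posOffDiagCount A i - n) * x := by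
  have h := sum_le_sum fun j (_ : j ∈ univ.erase i) => abs_sub_ite_le_abs_sub (a := A i j) hx
  rw [sum_sub_distrib, sum_erase_ite_pos] at h
  simp only [gershLower, sub_zero]
  linarith

lemma gershLower_eq_add_mul {x : ℝ} (hx : 0 ≤ x) (hxA : ∀ j, 0 < A i j → x ≤ A i j) :
    gershLower n A x i = gershLower n A 0 i + (2 * posOffDiagCount A i - n) * x := by
  have h := sum_congr rfl fun j (_ : j ∈ univ.erase i) =>
    abs_sub_eq_abs_sub_ite (a := A i j) hx (hxA j)
  rw [sum_sub_distrib, sum_erase_ite_pos] at h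
  simp only [gershLower, sub_zero]
  linarith

lemma gershLower_le_diag {x : ℝ} (hx : 0 ≤ x) : gershLower n A x i ≤ A i i := by
  have := sum_nonneg fun j (_ : j ∈ univ.erase i) => abs_nonneg (A i j - x)
  rw [gershLower]
  linarith

lemma continuous_gershLower : Continuous fun x => gershLower n A x i := by
  unfold gershLower
  fun_prop

lemma eventually_gershLower_eq_add_mul :
    ∀ᶠ x in 𝓝[≥] 0,
      gershLower n A x i = gershLower n A 0 i + (2 * posOffDiagCount A i - n) * x := by
  have hsmall : ∀ᶠ x in 𝓝 (0 : ℝ), ∀ j, 0 < A i j → x ≤ A i j :=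
    eventually_all.mpr fun j => by
      by_cases hj : 0 < A i j
      · exact (eventually_lt_nhds hj).mono fun x hx _ => hx.le
      · exact Eventually.of_forall fun _ h => absurd h hj
  filter_upwards [self_mem_nhdsWithin, nhdsWithin_le_nhds hsmall] with x hx hxA
  exact gershLower_eq_add_mul hx hxA

lemma eventually_lt_gershLower {μ : ℝ} (hμ : μ ≤ gershLower n A 0 i)
    (hcount : gershLower n A 0 i = μ → (n : ℝ) / 2 < posOffDiagCount A i) :
    ∀ᶠ x in 𝓝[>] 0, μ < gershLower n A x i := by
  rcases hμ.lt_or_eq with hlt | heq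
  · exact nhdsWithin_le_nhds <|
      (continuous_gershLower.tendsto 0).eventually_const_lt hlt
  · have hslope : 0 < 2 * (posOffDiagCount A i : ℝ) - n := by linarith [hcount heq.symm]
    filter_upwards [self_mem_nhdsWithin,
      nhdsWithin_mono _ Set.Ioi_subset_Ici_self eventually_gershLower_eq_add_mul]
      with x (hx : 0 < x) hdx
    rw [hdx, ← heq]
    nlinarith

lemma gershLower_le_of_le_half {x : ℝ} (hx : 0 ≤ x)
    (hcount : (posOffDiagCount A i : ℝ) ≤ n / 2) :
    gershLower n A x i ≤ gershLower n A 0 i := by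
  have := gershLower_le_add_mul (A := A) (i := i) hx
  nlinarith

lemma exists_forall_lt_gershLower {μ : ℝ} (hμ : ∀ i, μ ≤ gershLower n A 0 i)
    (hcount : ∀ i, gershLower n A 0 i = μ → (n : ℝ) / 2 < posOffDiagCount A i) :
    ∃ x, 0 < x ∧ ∀ i, μ < gershLower n A x i :=
  ((eventually_all.mpr fun i => eventually_lt_gershLower (hμ i) (hcount i)).and
    self_mem_nhdsWithin).exists.imp fun _ h => ⟨h.2, h.1⟩

variable (A) in
lemma bddAbove_range_iInf_gershLower (i : Fin n) :
    BddAbove (Set.range fun x : {x : ℝ // 0 ≤ x} => ⨅ j, gershLower n A x.1 j) :=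
  ⟨A i i, Set.forall_mem_range.mpr fun x =>
    (ciInf_le (Finite.bddBelow_range _) i).trans (gershLower_le_diag x.2)⟩

theorem shifted_gershgorin_local_improvement_lower_general (n : ℕ) (hn : 0 < n)
    (A : Matrix (Fin n) (Fin n) ℝ) :
    ((⨅ i, gershLower n A 0 i) <
        ⨆ x : {x : ℝ // 0 ≤ x}, ⨅ i, gershLower n A x.1 i) ↔
      (∀ i : Fin n, gershLower n A 0 i = (⨅ j, gershLower n A 0 j) →
        (n : ℝ) / 2 < (Nat.card {j : Fin n // j ≠ i ∧ 0 < A i j} : ℝ)) := by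
  have hμ : ∀ i, (⨅ j, gershLower n A 0 j) ≤ gershLower n A 0 i :=
    ciInf_le (Finite.bddBelow_range _)
  constructor
  · intro hlt i hi
    by_contra! hcount
    refine hlt.not_ge (ciSup_le fun x => ?_)
    calc (⨅ j, gershLower n A x.1 j) ≤ gershLower n A x.1 i :=
          ciInf_le (Finite.bddBelow_range _) i
      _ ≤ gershLower n A 0 i := gershLower_le_of_le_half x.2 hcount
      _ = ⨅ j, gershLower n A 0 j := hi
  · intro hcount
    have : Nonempty (Fin n) := ⟨⟨0, hn⟩⟩
    obtain ⟨x, hx, hlt⟩ := exists_forall_lt_gershLower hμ hcount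
    obtain ⟨i, hi⟩ := exists_eq_ciInf_of_finite (f := fun j => gershLower n A x j)
    calc (⨅ j, gershLower n A 0 j) < ⨅ j, gershLower n A x j := hi ▸ hlt i
      _ ≤ ⨆ x : {x : ℝ // 0 ≤ x}, ⨅ j, gershLower n A x.1 j :=
        le_ciSup (bddAbove_range_iInf_gershLower A i) ⟨x, hx.le⟩

/-- Local improvement criterion for the shifted Gershgorin lower bound:
shifting strictly improves the Gershgorin lower bound, i.e.
`sup_{x≥0} min_i d_i(A,x) > min_i d_i(A,0)`, if and only if every row `i` attaining the
unshifted bound has strictly more than `n/2` positive off-diagonal entries. -/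
theorem shifted_gershgorin_local_improvement_lower (n : ℕ) (hn : 0 < n)
    (A : Matrix (Fin n) (Fin n) ℝ) (hA : A.IsSymm) :
    ((⨅ i, gershLower n A 0 i) <
        ⨆ x : {x : ℝ // 0 ≤ x}, ⨅ i, gershLower n A x.1 i) ↔
      (∀ i : Fin n, gershLower n A 0 i = (⨅ j, gershLower n A 0 j) →
        (n : ℝ) / 2 < (Nat.card {j : Fin n // j ≠ i ∧ 0 < A i j} : ℝ)) :=
  shifted_gershgorin_local_improvement_lower_general n hn A
end

section
/- Let A be an n×n real symmetric matrix with entries a_{ij}, and let J = {i : D_i(A,0) = max_j D_j(A,0)} be the set of rows attaining the unshifted Gershgorin upper bound. Then inf_{x≤0} max_i D_i(A,x) < max_i D_i(A,0) (i.e. shifting strictly improves the Gershgorin upper bound) if and only if for every i ∈ J the number of indices j ≠ i with a_{ij} < 0 is strictly greater than n/2. -/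
/-!
Write the shift as `x = -t` with `t ≥ 0`. Since `|a + t| = |a| + t - 2 min(t, -a)` for `a < 0`
and `|a + t| = |a| + t` for `a ≥ 0`, each row function is
`D_i(A,-t) = D_i(A,0) + n t - 2 Σ_{j ≠ i, a_{ij} < 0} min(t, -a_{ij})`,
a convex piecewise linear function of `t` whose slope at `t = 0⁺` is `n - 2 p_i`, where `p_i`
counts the negative off-diagonal entries of row `i`.
If some maximal row has `2 p_i ≤ n`, by convexity it never drops below the unshifted maximum. Otherwise every
maximal row strictly decreases for small `t > 0`, while by continuity the other rows stay below the
maximum, so the shifted maximum is smaller.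
-/

open Finset Filter Topology

lemma abs_add_eq_of_nonneg_right {a t : ℝ} (ht : 0 ≤ t) :
    |a + t| = |a| + t - 2 * (if a < 0 then min t (-a) else 0) := by
  split_ifs with ha
  · rcases le_total t (-a) with h | h
    · rw [min_eq_left h, abs_of_nonpos (by linarith), abs_of_neg ha]; ring
    · rw [min_eq_right h, abs_of_nonneg (by linarith), abs_of_neg ha]; ring
  · rw [abs_of_nonneg (by linarith [not_lt.1 ha]), abs_of_nonneg (not_lt.1 ha)]; ring

variable {n : ℕ} (A : Matrix (Fin n) (Fin n) ℝ)

noncomputable def negOffDiag (i : Fin n) : Finset (Fin n) := (univ.erase i).filter (A i · < 0)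

lemma natCard_negOffDiag (i : Fin n) :
    Nat.card {j : Fin n // j ≠ i ∧ A i j < 0} = #(negOffDiag A i) := by
  rw [Nat.card_eq_fintype_card, Fintype.card_subtype, negOffDiag, filter_erase,
    ← filter_ne', filter_filter]
  simp only [and_comm]

lemma continuous_gershUpper (i : Fin n) : Continuous fun x => gershUpper n A x i := by
  unfold gershUpper; fun_prop

lemma sub_le_gershUpper (x : ℝ) (i : Fin n) : A i i - x ≤ gershUpper n A x i :=
  le_add_of_nonneg_right (sum_nonneg fun _ _ => abs_nonneg _)

lemma gershUpper_neg {t : ℝ} (ht : 0 ≤ t) (i : Fin n) :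
    gershUpper n A (-t) i =
      gershUpper n A 0 i + n * t - 2 * ∑ j ∈ negOffDiag A i, min t (-A i j) := by
  have hcard : (#(univ.erase i) : ℝ) + 1 = n := by
    exact_mod_cast (card_erase_add_one (mem_univ i)).trans (card_fin n)
  simp only [gershUpper, sub_neg_eq_add, sub_zero, abs_add_eq_of_nonneg_right ht, sum_sub_distrib,
    sum_add_distrib, sum_const, nsmul_eq_mul, ← mul_sum, negOffDiag, sum_filter]
  rw [← hcard]; ring

lemma gershUpper_zero_add_slope_le {t : ℝ} (ht : 0 ≤ t) (i : Fin n) :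
    gershUpper n A 0 i + (n - 2 * #(negOffDiag A i)) * t ≤ gershUpper n A (-t) i := by
  have hsum : ∑ j ∈ negOffDiag A i, min t (-A i j) ≤ #(negOffDiag A i) * t := by
    simpa using sum_le_card_nsmul _ _ t fun j _ => min_le_left t (-A i j)
  rw [gershUpper_neg A ht]; linarith

lemma gershUpper_neg_eq_of_le {t : ℝ} (ht : 0 ≤ t) (i : Fin n)
    (hsmall : ∀ j ∈ negOffDiag A i, t ≤ -A i j) :
    gershUpper n A (-t) i = gershUpper n A 0 i + (n - 2 * #(negOffDiag A i)) * t := by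
  rw [gershUpper_neg A ht, sum_congr rfl fun j hj => min_eq_left (hsmall j hj), sum_const,
    nsmul_eq_mul]
  ring

lemma eventually_gershUpper_neg_lt {M : ℝ} (i : Fin n) (hle : gershUpper n A 0 i ≤ M)
    (hslope : gershUpper n A 0 i = M → (n : ℝ) < 2 * #(negOffDiag A i)) :
    ∀ᶠ t in 𝓝[>] 0, gershUpper n A (-t) i < M := by
  rcases hle.lt_or_eq with hlt | heq
  · have hcont : Continuous fun t => gershUpper n A (-t) i :=
      (continuous_gershUpper A i).comp continuous_neg
    refine nhdsWithin_le_nhds (hcont.continuousAt.eventually_lt continuousAt_const ?_)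
    simpa using hlt
  · have hsmall : ∀ᶠ t in 𝓝 (0 : ℝ), ∀ j ∈ negOffDiag A i, t ≤ -A i j :=
      (eventually_all_finset _).2 fun j hj =>
        eventually_le_nhds (neg_pos.2 (mem_filter.1 hj).2)
    filter_upwards [nhdsWithin_le_nhds hsmall, self_mem_nhdsWithin] with t ht htpos
    rw [gershUpper_neg_eq_of_le A (le_of_lt htpos) i ht, heq]
    nlinarith [hslope heq, htpos.out]

lemma gershUpper_le_iSup (x : ℝ) (i : Fin n) : gershUpper n A x i ≤ ⨆ j, gershUpper n A x j :=
  le_ciSup (Set.finite_range _).bddAbove i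

lemma bddBelow_range_iSup_gershUpper (i : Fin n) :
    BddBelow (Set.range fun x : {x : ℝ // x ≤ 0} => ⨆ j, gershUpper n A x.1 j) :=
  ⟨A i i, Set.forall_mem_range.2 fun x =>
    ((sub_le_gershUpper A x.1 i).trans' (by linarith [x.2])).trans (gershUpper_le_iSup A x.1 i)⟩

lemma gershUpper_zero_le_iSup_of_two_mul_card_le {x : ℝ} (hx : x ≤ 0) (i : Fin n)
    (hp : 2 * (#(negOffDiag A i) : ℝ) ≤ n) :
    gershUpper n A 0 i ≤ ⨆ j, gershUpper n A x j :=
  calc gershUpper n A 0 i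
      ≤ gershUpper n A 0 i + (n - 2 * #(negOffDiag A i)) * -x :=
        le_add_of_nonneg_right (mul_nonneg (sub_nonneg.2 hp) (neg_nonneg.2 hx))
    _ ≤ gershUpper n A x i := by simpa using gershUpper_zero_add_slope_le A (neg_nonneg.2 hx) i
    _ ≤ _ := gershUpper_le_iSup A x i

theorem shifted_gershgorin_local_improvement_upper_general (n : ℕ) (hn : 0 < n)
    (A : Matrix (Fin n) (Fin n) ℝ) :
    ((⨅ x : {x : ℝ // x ≤ 0}, ⨆ i, gershUpper n A x.1 i) <
        ⨆ i, gershUpper n A 0 i) ↔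
      (∀ i : Fin n, gershUpper n A 0 i = (⨆ j, gershUpper n A 0 j) →
        (n : ℝ) / 2 < (Nat.card {j : Fin n // j ≠ i ∧ A i j < 0} : ℝ)) := by
  have : Nonempty (Fin n) := ⟨⟨0, hn⟩⟩
  have : Nonempty {x : ℝ // x ≤ 0} := ⟨⟨0, le_rfl⟩⟩
  simp only [natCard_negOffDiag]
  constructor
  · intro himp i hi
    by_contra! hp
    exact himp.not_ge <| le_ciInf fun x =>
      hi ▸ gershUpper_zero_le_iSup_of_two_mul_card_le A x.2 i (by linarith)
  · intro H
    have hrows : ∀ᶠ t in 𝓝[>] 0, ∀ i, gershUpper n A (-t) i < ⨆ j, gershUpper n A 0 j :=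
      eventually_all.2 fun i => eventually_gershUpper_neg_lt A i (gershUpper_le_iSup A 0 i)
        fun hi => by linarith [H i hi]
    obtain ⟨t, hlt, htpos⟩ := (hrows.and self_mem_nhdsWithin).exists
    obtain ⟨i, hi⟩ := exists_eq_ciSup_of_finite (f := fun i => gershUpper n A (-t) i)
    calc (⨅ x : {x : ℝ // x ≤ 0}, ⨆ i, gershUpper n A x.1 i)
        ≤ ⨆ i, gershUpper n A (-t) i :=
          ciInf_le (bddBelow_range_iSup_gershUpper A i) ⟨-t, neg_nonpos.2 (le_of_lt htpos)⟩
      _ < ⨆ j, gershUpper n A 0 j := hi ▸ hlt i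

/-- Local improvement criterion for the shifted Gershgorin upper bound:
shifting strictly improves the Gershgorin upper bound, i.e.
`inf_{x≤0} max_i D_i(A,x) < max_i D_i(A,0)`, if and only if every row `i` attaining the
unshifted bound has strictly more than `n/2` negative off-diagonal entries. -/
theorem shifted_gershgorin_local_improvement_upper (n : ℕ) (hn : 0 < n)
    (A : Matrix (Fin n) (Fin n) ℝ) (hA : A.IsSymm) :
    ((⨅ x : {x : ℝ // x ≤ 0}, ⨆ i, gershUpper n A x.1 i) <
        ⨆ i, gershUpper n A 0 i) ↔
      (∀ i : Fin n, gershUpper n A 0 i = (⨆ j, gershUpper n A 0 j) →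
        (n : ℝ) / 2 < (Nat.card {j : Fin n // j ≠ i ∧ A i j < 0} : ℝ)) :=
  shifted_gershgorin_local_improvement_upper_general n hn A
end

section
/- Let A be an n×n real symmetric matrix (n ≥ 2) all of whose off-diagonal entries are strictly positive. Then the shifted Gershgorin lower bound admits the closed form sup_{x≥0} min_i d_i(A,x) = min_{(k,l)} ((n/2 − k)·s_l + (l − n/2)·s_k)/(l − k), where the minimum is taken over all pairs of integers (k,l) with 1 ≤ k ≤ n/2 < l ≤ n. -/
/-- `s_k = min_i (a_{ii} + δ_{i,k})` (here `k : Fin n` has paper index `k+1`). -/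
noncomputable def sK (n : ℕ) (A : Matrix (Fin n) (Fin n) ℝ)
    (y : Fin n → Fin (n - 1) → ℝ) (k : Fin n) : ℝ :=
  ⨅ i : Fin n, (A i i + deltaIK n y i k)

open Finset

section LowerEnvelope

variable {ι : Type*} (s c : ι → ℝ)

/-- The common value of the lines `s k + c k * x` and `s l + c l * x` where they cross. -/
noncomputable def crossValue (k l : ι) : ℝ := (c k * s l - c l * s k) / (c k - c l)

theorem crossValue_le_right {k l : ι} (hk : 0 ≤ c k) (hl : c l < 0) (hs : s k ≤ s l) :
    crossValue s c k l ≤ s l := by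
  rw [crossValue, div_le_iff₀ (by linarith)]
  nlinarith

variable [Fintype ι]

theorem iInf_line_le_crossValue (x : ℝ) {k l : ι} (hk : 0 ≤ c k) (hl : c l < 0) :
    ⨅ j, (s j + c j * x) ≤ crossValue s c k l := by
  have hbdd := (Set.finite_range fun j => s j + c j * x).bddBelow
  rw [crossValue, le_div_iff₀ (by linarith)]
  nlinarith [mul_le_mul_of_nonneg_left (ciInf_le hbdd k) (neg_nonneg.2 hl.le),
    mul_le_mul_of_nonneg_left (ciInf_le hbdd l) hk]

theorem exists_nonneg_forall_le_line {V : ℝ} (hN : ∃ l, c l < 0)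
    (hV : ∀ k l, 0 ≤ c k → c l < 0 → V ≤ crossValue s c k l)
    (hVs : ∀ l, c l < 0 → V ≤ s l) :
    ∃ x, 0 ≤ x ∧ ∀ k, V ≤ s k + c k * x := by
  classical
  obtain ⟨l, hl, hmin⟩ := (univ.filter (c · < 0)).exists_min_image
    (fun l => (s l - V) / -c l) (hN.imp fun l hl => by simpa using hl)
  rw [mem_filter] at hl
  have hl' : 0 < -c l := neg_pos.2 hl.2
  refine ⟨(s l - V) / -c l, div_nonneg (sub_nonneg.2 (hVs l hl.2)) hl'.le, fun k => ?_⟩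
  have hx : (s l - V) / -c l * -c l = s l - V := div_mul_cancel₀ _ hl'.ne'
  rcases lt_or_ge (c k) 0 with hk | hk
  · have := hmin k (by simpa using hk)
    rw [le_div_iff₀ (neg_pos.2 hk)] at this
    linarith
  · have := hV k l hk hl.2
    rw [crossValue, le_div_iff₀ (by linarith)] at this
    nlinarith

theorem iSup_nonneg_iInf_line_eq_iInf_crossValue {k₀ : ι} (hk₀ : 0 ≤ c k₀)
    (hs : ∀ l, c l < 0 → s k₀ ≤ s l) (hN : ∃ l, c l < 0) :
    (⨆ x : {x : ℝ // 0 ≤ x}, ⨅ k, (s k + c k * x)) =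
      ⨅ p : {p : ι × ι // 0 ≤ c p.1 ∧ c p.2 < 0}, crossValue s c p.1.1 p.1.2 := by
  obtain ⟨l₀, hl₀⟩ := hN
  have : Nonempty ι := ⟨k₀⟩
  have : Nonempty {x : ℝ // 0 ≤ x} := ⟨⟨0, le_rfl⟩⟩
  have : Nonempty {p : ι × ι // 0 ≤ c p.1 ∧ c p.2 < 0} :=
    ⟨⟨(k₀, l₀), hk₀, hl₀⟩⟩
  refine le_antisymm
    (ciSup_le fun x => le_ciInf fun p => iInf_line_le_crossValue s c x p.2.1 p.2.2) ?_
  have hV : ∀ k l, 0 ≤ c k → c l < 0 →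
      (⨅ p : {p : ι × ι // 0 ≤ c p.1 ∧ c p.2 < 0}, crossValue s c p.1.1 p.1.2) ≤
        crossValue s c k l :=
    fun k l hk hl => ciInf_le (Set.finite_range _).bddBelow
      (⟨(k, l), hk, hl⟩ : {p : ι × ι // 0 ≤ c p.1 ∧ c p.2 < 0})
  obtain ⟨x, hx, hxV⟩ := exists_nonneg_forall_le_line s c ⟨l₀, hl₀⟩ hV
    fun l hl => (hV k₀ l hk₀ hl).trans (crossValue_le_right s c hk₀ hl (hs l hl))
  have hbdd : BddAbove (Set.range fun x : {x : ℝ // 0 ≤ x} => ⨅ k, (s k + c k * x)) :=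
    ⟨_, by rintro _ ⟨x, rfl⟩; exact iInf_line_le_crossValue s c x hk₀ hl₀⟩
  exact (le_ciInf hxV).trans (le_ciSup hbdd ⟨x, hx⟩)

end LowerEnvelope

section SplitSum

variable {m : ℕ} (y : Fin m → ℝ) (x : ℝ) (k : ℕ)

theorem sum_ite_lt_sub_eq (hk : k ≤ m) :
    ∑ j : Fin m, (if (j : ℕ) < k then x - y j else y j - x) =
      (2 * k - m) * x - ((∑ j ∈ univ.filter (fun j : Fin m => (j : ℕ) < k), y j) -
        ∑ j ∈ univ.filter (fun j : Fin m => k ≤ (j : ℕ)), y j) := by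
  have hcard := card_filter_add_card_filter_not (s := (univ : Finset (Fin m)))
    (fun j : Fin m => k ≤ (j : ℕ))
  simp only [not_le, Fin.card_filter_val_lt, min_eq_right hk, card_univ, Fintype.card_fin] at hcard
  have hcard' : (#{j : Fin m | k ≤ (j : ℕ)} : ℝ) = m - k := by
    rw [eq_sub_iff_add_eq]; exact_mod_cast hcard
  rw [sum_ite]
  simp only [not_lt, sum_sub_distrib, sum_const, nsmul_eq_mul, Fin.card_filter_val_lt,
    min_eq_right hk, hcard']
  ring

theorem sum_ite_lt_sub_le_sum_abs :
    ∑ j : Fin m, (if (j : ℕ) < k then x - y j else y j - x) ≤ ∑ j : Fin m, |y j - x| :=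
  sum_le_sum fun j _ => by
    split_ifs
    · exact abs_sub_comm x (y j) ▸ le_abs_self _
    · exact le_abs_self _

theorem Monotone.sum_abs_sub_eq_sum_ite (hy : Monotone y) :
    ∑ j : Fin m, |y j - x| =
      ∑ j : Fin m, (if (j : ℕ) < #{i | y i < x} then x - y j else y j - x) :=
  sum_congr rfl fun j _ => by
    have h : (j : ℕ) < #{i | y i < x} ↔ y j < x :=
      Fin.lt_card_filter_univ_iff_apply_of_imp _ fun _ _ hji hi => (hy hji).trans_lt hi
    split_ifs with hj
    · rw [abs_of_neg (sub_neg.2 (h.1 hj)), neg_sub]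
    · exact abs_of_nonneg (sub_nonneg.2 (not_lt.1 (mt h.2 hj)))

end SplitSum

/-- `k : Fin n` carries the paper's index `k + 1`, so this is the paper's slope `n - 2k`. -/
noncomputable def gershSlope (n : ℕ) (k : Fin n) : ℝ := n - 2 * ((k : ℕ) + 1)

section RowBounds

variable {n : ℕ} (A : Matrix (Fin n) (Fin n) ℝ) (y : Fin n → Fin (n - 1) → ℝ)
  (e : ∀ i : Fin n, Fin (n - 1) ≃ {j : Fin n // j ≠ i}) (hy : ∀ i k, y i k = A i (e i k).1)
include hy

theorem gershLower_eq_sum_abs (x : ℝ) (i : Fin n) :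
    gershLower n A x i = A i i - x - ∑ j : Fin (n - 1), |y i j - x| := by
  rw [gershLower, sum_subtype (p := (· ≠ i)) _ (fun j => by simp) (fun j => |A i j - x|),
    ← (e i).sum_comp (fun j => |A i j.1 - x|)]
  simp only [hy]

theorem gershLower_le_line (x : ℝ) (i k : Fin n) :
    gershLower n A x i ≤ A i i + deltaIK n y i k + gershSlope n k * x := by
  have hk : (k : ℕ) ≤ n - 1 := by omega
  have hsum := sum_ite_lt_sub_le_sum_abs (y i) x k
  rw [sum_ite_lt_sub_eq (y i) x k hk, Nat.cast_sub (by omega : 1 ≤ n)] at hsum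
  rw [gershLower_eq_sum_abs A y e hy, deltaIK, gershSlope]
  push_cast at hsum
  linarith

theorem exists_gershLower_eq_line (x : ℝ) (i : Fin n) (hmono : Monotone (y i)) :
    ∃ k : Fin n, gershLower n A x i = A i i + deltaIK n y i k + gershSlope n k * x := by
  have hn : 0 < n := i.pos
  have hk : #{j | y i j < x} ≤ n - 1 := (card_le_univ _).trans_eq (Fintype.card_fin _)
  refine ⟨⟨#{j | y i j < x}, by omega⟩, ?_⟩
  rw [gershLower_eq_sum_abs A y e hy, hmono.sum_abs_sub_eq_sum_ite, sum_ite_lt_sub_eq _ _ _ hk,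
    deltaIK, gershSlope, Nat.cast_sub (by omega : 1 ≤ n)]
  push_cast
  ring

theorem iInf_gershLower_eq [NeZero n] (hmono : ∀ i, Monotone (y i)) (x : ℝ) :
    ⨅ i, gershLower n A x i = ⨅ k : Fin n, (sK n A y k + gershSlope n k * x) := by
  apply le_antisymm
  · refine le_ciInf fun k => ?_
    obtain ⟨i, hi⟩ := exists_eq_ciInf_of_finite (f := fun i => A i i + deltaIK n y i k)
    calc ⨅ i, gershLower n A x i
        ≤ gershLower n A x i := ciInf_le (Set.finite_range _).bddBelow i
      _ ≤ A i i + deltaIK n y i k + gershSlope n k * x :=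
        gershLower_le_line A y e hy x i k
      _ = sK n A y k + gershSlope n k * x := by rw [sK, ← hi]
  · refine le_ciInf fun i => ?_
    obtain ⟨k, hk⟩ := exists_gershLower_eq_line A y e hy x i (hmono i)
    calc ⨅ k : Fin n, (sK n A y k + gershSlope n k * x)
        ≤ sK n A y k + gershSlope n k * x := ciInf_le (Set.finite_range _).bddBelow k
      _ ≤ A i i + deltaIK n y i k + gershSlope n k * x :=
        add_le_add_left (ciInf_le (Set.finite_range _).bddBelow i) _
      _ = gershLower n A x i := hk.symm

end RowBounds

section Intercepts

variable {n : ℕ} [NeZero n] (y : Fin n → Fin (n - 1) → ℝ)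

theorem deltaIK_zero_le (i : Fin n) (hy : ∀ j, 0 ≤ y i j) (k : Fin n) :
    deltaIK n y i 0 ≤ deltaIK n y i k := by
  simp only [deltaIK, Fin.val_zero, Nat.not_lt_zero, filter_false, sum_empty, zero_le,
    filter_true]
  linarith [sum_nonneg fun j (_ : j ∈ univ.filter (fun j : Fin (n - 1) => (j : ℕ) < k)) => hy j,
    sum_le_univ_sum_of_nonneg (s := univ.filter (fun j : Fin (n - 1) => (k : ℕ) ≤ j)) hy]

theorem sK_zero_le (A : Matrix (Fin n) (Fin n) ℝ) (hy : ∀ i j, 0 ≤ y i j) (k : Fin n) :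
    sK n A y 0 ≤ sK n A y k :=
  ciInf_mono (Set.finite_range _).bddBelow fun i =>
    add_le_add_right (deltaIK_zero_le y i (hy i) k) _

end Intercepts

section Slopes

variable {n : ℕ}

theorem gershSlope_nonneg_iff (k : Fin n) :
    0 ≤ gershSlope n k ↔ ((k : ℕ) + 1 : ℝ) ≤ n / 2 := by
  rw [gershSlope]; constructor <;> intro <;> linarith

theorem gershSlope_neg_iff (l : Fin n) : gershSlope n l < 0 ↔ (n : ℝ) / 2 < (l : ℕ) + 1 := by
  rw [gershSlope]; constructor <;> intro <;> linarith

theorem crossValue_gershSlope (s : Fin n → ℝ) (k l : Fin n) :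
    crossValue s (gershSlope n) k l =
      (((n : ℝ) / 2 - ((k : ℕ) + 1)) * s l + (((l : ℕ) + 1) - (n : ℝ) / 2) * s k) /
        ((((l : ℕ) + 1) : ℝ) - (((k : ℕ) + 1) : ℝ)) := by
  rw [crossValue, gershSlope, gershSlope, eq_comm, ← mul_div_mul_left _ _ (two_ne_zero' ℝ)]
  congr 1 <;> ring

end Slopes

theorem shifted_gershgorin_closed_form_general (n : ℕ) (hn : 2 ≤ n)
    (A : Matrix (Fin n) (Fin n) ℝ)
    (hpos : ∀ i j : Fin n, i ≠ j → 0 < A i j)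
    (y : Fin n → Fin (n - 1) → ℝ) (e : ∀ i : Fin n, Fin (n - 1) ≃ {j : Fin n // j ≠ i})
    (hy : ∀ i k, y i k = A i (e i k).1) (hmono : ∀ i, Monotone (y i)) :
    (⨆ x : {x : ℝ // 0 ≤ x}, ⨅ i, gershLower n A x.1 i) =
      ⨅ p : {p : Fin n × Fin n //
          ((p.1 : ℕ) + 1 : ℝ) ≤ (n : ℝ) / 2 ∧ (n : ℝ) / 2 < ((p.2 : ℕ) + 1 : ℝ)},
        (((n : ℝ) / 2 - ((p.1.1 : ℕ) + 1)) * sK n A y p.1.2 +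
          (((p.1.2 : ℕ) + 1) - (n : ℝ) / 2) * sK n A y p.1.1) /
          ((((p.1.2 : ℕ) + 1) : ℝ) - (((p.1.1 : ℕ) + 1) : ℝ)) := by
  have : NeZero n := ⟨by omega⟩
  have hy₀ : ∀ i j, 0 ≤ y i j := fun i j => by
    rw [hy]; exact (hpos i _ (e i j).2.symm).le
  have hn' : (2 : ℝ) ≤ n := by exact_mod_cast hn
  have hslope₀ : 0 ≤ gershSlope n 0 := by
    rw [gershSlope_nonneg_iff, Fin.val_zero]; push_cast; linarith
  have hslope_last : gershSlope n ⟨n - 1, by omega⟩ < 0 := by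
    rw [gershSlope_neg_iff, Nat.cast_sub (by omega : 1 ≤ n)]; push_cast; linarith
  calc (⨆ x : {x : ℝ // 0 ≤ x}, ⨅ i, gershLower n A x.1 i)
      = ⨆ x : {x : ℝ // 0 ≤ x}, ⨅ k, (sK n A y k + gershSlope n k * x) :=
        iSup_congr fun x => iInf_gershLower_eq A y e hy hmono x.1
    _ = ⨅ p : {p : Fin n × Fin n // 0 ≤ gershSlope n p.1 ∧ gershSlope n p.2 < 0},
          crossValue (sK n A y) (gershSlope n) p.1.1 p.1.2 :=
        iSup_nonneg_iInf_line_eq_iInf_crossValue _ _ hslope₀ (fun l _ => sK_zero_le y A hy₀ l)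
          ⟨_, hslope_last⟩
    _ = _ := Equiv.iInf_congr (Equiv.subtypeEquivRight fun p =>
          and_congr (gershSlope_nonneg_iff _) (gershSlope_neg_iff _))
          fun p => (crossValue_gershSlope _ _ _).symm

/-- Closed form for the shifted Gershgorin lower bound of a symmetric matrix with strictly
positive off-diagonal entries:
`sup_{x≥0} min_i d_i(A,x) = min_{1 ≤ k ≤ n/2 < l ≤ n} ((n/2 − k)s_l + (l − n/2)s_k)/(l − k)`
(pairs `(k,l) : Fin n × Fin n` carry paper indices `k+1`, `l+1`). -/
theorem shifted_gershgorin_closed_form (n : ℕ) (hn : 2 ≤ n)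
    (A : Matrix (Fin n) (Fin n) ℝ) (hA : A.IsSymm)
    (hpos : ∀ i j : Fin n, i ≠ j → 0 < A i j)
    (y : Fin n → Fin (n - 1) → ℝ) (e : ∀ i : Fin n, Fin (n - 1) ≃ {j : Fin n // j ≠ i})
    (hy : ∀ i k, y i k = A i (e i k).1) (hmono : ∀ i, Monotone (y i)) :
    (⨆ x : {x : ℝ // 0 ≤ x}, ⨅ i, gershLower n A x.1 i) =
      ⨅ p : {p : Fin n × Fin n //
          ((p.1 : ℕ) + 1 : ℝ) ≤ (n : ℝ) / 2 ∧ (n : ℝ) / 2 < ((p.2 : ℕ) + 1 : ℝ)},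
        (((n : ℝ) / 2 - ((p.1.1 : ℕ) + 1)) * sK n A y p.1.2 +
          (((p.1.2 : ℕ) + 1) - (n : ℝ) / 2) * sK n A y p.1.1) /
          ((((p.1.2 : ℕ) + 1) : ℝ) - (((p.1.1 : ℕ) + 1) : ℝ)) :=
  shifted_gershgorin_closed_form_general n hn A hpos y e hy hmono
end

section
/- Let A be an n×n real symmetric matrix and suppose that s_l < s_k for every pair of integers (k,l) with 1 ≤ k ≤ n/2 < l ≤ n. Then shifting gives no improvement: sup_{x≥0} min_i d_i(A,x) = min_i d_i(A,0). -/
/-! For a row `i` and a split point `K` (0-indexed), the bounds `|t| ≥ ±t` give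
`d_i(A,x) ≤ a_ii + δ_{i,K} + (n - 2 - 2K) x`, with equality at `x = 0` when `K` counts the
negative entries of the sorted row; hence `min_i d_i(A,0) ≥ min_K s_K`. The hypothesis puts a
minimiser `K` of `s_K` past `n/2`, where the slope `n - 2 - 2K` is nonpositive, so
`min_i d_i(A,x) ≤ s_K` for every `x ≥ 0`. -/

open Finset

section SumAbs

variable {ι R : Type*} [Fintype ι] [AddCommGroup R] [LinearOrder R] [IsOrderedAddMonoid R]

lemma sum_filter_add_sum_filter_not_le_sum_abs_sub (p : ι → Prop)
    [DecidablePred p] (y : ι → R) (x : R) :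
    ∑ j ∈ univ.filter p, (x - y j) + ∑ j ∈ univ.filter (¬p ·), (y j - x) ≤
      ∑ j, |y j - x| := by
  rw [← sum_filter_add_sum_filter_not univ p]
  gcongr with j
  · exact abs_sub_comm (y j) x ▸ le_abs_self _
  · exact le_abs_self _

lemma sum_abs_sub_eq_sum_filter_add_sum_filter_not (p : ι → Prop)
    [DecidablePred p] (y : ι → R) (x : R) (hp : ∀ j, p j ↔ y j < x) :
    ∑ j, |y j - x| = ∑ j ∈ univ.filter p, (x - y j) + ∑ j ∈ univ.filter (¬p ·), (y j - x) := by
  rw [← sum_filter_add_sum_filter_not univ p]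
  congr 1 <;> refine sum_congr rfl fun j hj => ?_ <;> simp only [mem_filter, hp] at hj
  · rw [abs_sub_comm, abs_of_pos (sub_pos.2 hj.2)]
  · exact abs_of_nonneg (sub_nonneg.2 (not_lt.1 hj.2))

end SumAbs

lemma Fin.exists_lt_iff_of_monotone {α : Type*} [LinearOrder α] {m : ℕ} {y : Fin m → α}
    (hy : Monotone y) (x : α) :
    ∃ K : ℕ, K ≤ m ∧ ∀ j : Fin m, (j : ℕ) < K ↔ y j < x :=
  ⟨#{j | y j < x}, (card_filter_le _ _).trans_eq (card_fin m),
    fun _ => Fin.lt_card_filter_univ_iff_apply_of_imp _ fun _ _ hji hi => (hy hji).trans_lt hi⟩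

lemma Fin.half_lt_succ_of_forall_le {n : ℕ} (s : Fin n → ℝ)
    (hs : ∀ k l : Fin n, ((k : ℕ) + 1 : ℝ) ≤ (n : ℝ) / 2 → (n : ℝ) / 2 < ((l : ℕ) + 1 : ℝ) →
      s l < s k)
    {K : Fin n} (hK : ∀ k, s K ≤ s k) : (n : ℝ) / 2 < (K : ℕ) + 1 := by
  by_contra! hKn
  have hn : 0 < n := K.pos
  have hlast : ((n - 1 : ℕ) : ℝ) + 1 = n := by exact_mod_cast Nat.sub_add_cancel hn
  refine (hs K ⟨n - 1, Nat.sub_lt hn Nat.one_pos⟩ hKn ?_).not_ge (hK _)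
  rw [hlast]
  linarith [(Nat.cast_pos.2 hn : (0 : ℝ) < n)]

section Gershgorin

variable {n : ℕ} {A : Matrix (Fin n) (Fin n) ℝ} {y : Fin n → Fin (n - 1) → ℝ} {i : Fin n}

lemma gershLower_eq_sum_abs_sub (e : Fin (n - 1) ≃ {j : Fin n // j ≠ i})
    (hy : ∀ k, y i k = A i (e k)) (x : ℝ) :
    gershLower n A x i = A i i - x - ∑ k, |y i k - x| := by
  rw [gershLower, sum_subtype (univ.erase i) (p := (· ≠ i)) (by simp),
    ← Equiv.sum_comp e fun j => |A i j - x|]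
  simp only [hy]

lemma deltaIK_eq_sum_filter_sub_sum_filter_not (k : Fin n) :
    deltaIK n y i k = ∑ j ∈ univ.filter (fun j : Fin (n - 1) => (j : ℕ) < k), y i j -
      ∑ j ∈ univ.filter (fun j : Fin (n - 1) => ¬ (j : ℕ) < k), y i j := by
  simp only [deltaIK, not_lt]

lemma gershLower_le_add_deltaIK (e : Fin (n - 1) ≃ {j : Fin n // j ≠ i})
    (hy : ∀ k, y i k = A i (e k)) (K : Fin n) (x : ℝ) :
    gershLower n A x i ≤ A i i + deltaIK n y i K + ((n : ℝ) - 2 - 2 * (K : ℕ)) * x := by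
  have h := sum_filter_add_sum_filter_not_le_sum_abs_sub (fun j : Fin (n - 1) => (j : ℕ) < K)
    (y i) x
  have hcard_lt : #{j : Fin (n - 1) | (j : ℕ) < K} = K := by
    rw [Fin.card_filter_val_lt]; omega
  have hcard_ge : (#{j : Fin (n - 1) | ¬ (j : ℕ) < K} : ℝ) = n - 1 - K := by
    have := card_filter_add_card_filter_not (s := univ) (fun j : Fin (n - 1) => (j : ℕ) < K)
    rw [card_univ, Fintype.card_fin, hcard_lt] at this
    rw [eq_sub_iff_add_eq, eq_sub_iff_add_eq]
    exact_mod_cast (by omega : _ + K + 1 = n)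
  simp only [sum_sub_distrib, sum_const, nsmul_eq_mul, hcard_lt, hcard_ge] at h
  rw [gershLower_eq_sum_abs_sub e hy, deltaIK_eq_sum_filter_sub_sum_filter_not]
  linarith

lemma exists_gershLower_zero_eq_add_deltaIK (e : Fin (n - 1) ≃ {j : Fin n // j ≠ i})
    (hy : ∀ k, y i k = A i (e k)) (hmono : Monotone (y i)) :
    ∃ K : Fin n, gershLower n A 0 i = A i i + deltaIK n y i K := by
  obtain ⟨K, hKle, hK⟩ := Fin.exists_lt_iff_of_monotone hmono 0
  refine ⟨⟨K, by have := i.pos; omega⟩, ?_⟩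
  rw [gershLower_eq_sum_abs_sub e hy, deltaIK_eq_sum_filter_sub_sum_filter_not,
    sum_abs_sub_eq_sum_filter_add_sum_filter_not _ _ _ hK]
  simp only [zero_sub, sub_zero, sum_neg_distrib]
  ring

end Gershgorin

section Shift

variable {n : ℕ} {A : Matrix (Fin n) (Fin n) ℝ} {y : Fin n → Fin (n - 1) → ℝ}

lemma sK_le_add_deltaIK (i k : Fin n) : sK n A y k ≤ A i i + deltaIK n y i k :=
  ciInf_le (Finite.bddBelow_range _) i

lemma iInf_gershLower_le_sK (e : ∀ i : Fin n, Fin (n - 1) ≃ {j : Fin n // j ≠ i})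
    (hy : ∀ i k, y i k = A i (e i k)) {K : Fin n} (hK : (n : ℝ) / 2 < (K : ℕ) + 1)
    {x : ℝ} (hx : 0 ≤ x) :
    ⨅ i, gershLower n A x i ≤ sK n A y K := by
  have : Nonempty (Fin n) := ⟨K⟩
  obtain ⟨i, hi⟩ := exists_eq_ciInf_of_finite (f := fun i => A i i + deltaIK n y i K)
  have hslope : ((n : ℝ) - 2 - 2 * (K : ℕ)) * x ≤ 0 :=
    mul_nonpos_of_nonpos_of_nonneg (by linarith) hx
  calc ⨅ i, gershLower n A x i
      ≤ gershLower n A x i := ciInf_le (Finite.bddBelow_range _) i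
    _ ≤ A i i + deltaIK n y i K + ((n : ℝ) - 2 - 2 * (K : ℕ)) * x :=
      gershLower_le_add_deltaIK (e i) (hy i) K x
    _ ≤ sK n A y K := hi ▸ add_le_of_nonpos_right hslope

lemma sK_le_iInf_gershLower_zero (e : ∀ i : Fin n, Fin (n - 1) ≃ {j : Fin n // j ≠ i})
    (hy : ∀ i k, y i k = A i (e i k)) (hmono : ∀ i, Monotone (y i)) {K : Fin n}
    (hK : ∀ k, sK n A y K ≤ sK n A y k) :
    sK n A y K ≤ ⨅ i, gershLower n A 0 i := by
  have : Nonempty (Fin n) := ⟨K⟩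
  refine le_ciInf fun i => ?_
  obtain ⟨k, hk⟩ := exists_gershLower_zero_eq_add_deltaIK (e i) (hy i) (hmono i)
  exact hk ▸ (hK k).trans (sK_le_add_deltaIK i k)

lemma iInf_gershLower_le_iInf_gershLower_zero
    (e : ∀ i : Fin n, Fin (n - 1) ≃ {j : Fin n // j ≠ i})
    (hy : ∀ i k, y i k = A i (e i k)) (hmono : ∀ i, Monotone (y i))
    (hQ : ∀ k l : Fin n, ((k : ℕ) + 1 : ℝ) ≤ (n : ℝ) / 2 →
      (n : ℝ) / 2 < ((l : ℕ) + 1 : ℝ) → sK n A y l < sK n A y k)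
    {x : ℝ} (hx : 0 ≤ x) :
    ⨅ i, gershLower n A x i ≤ ⨅ i, gershLower n A 0 i := by
  rcases isEmpty_or_nonempty (Fin n) with hn | hn
  · simp
  obtain ⟨K, hK⟩ := Finite.exists_min (sK n A y)
  exact (iInf_gershLower_le_sK e hy (Fin.half_lt_succ_of_forall_le _ hQ hK) hx).trans
    (sK_le_iInf_gershLower_zero e hy hmono hK)

end Shift

theorem shifted_gershgorin_no_improvement_general (n : ℕ)
    (A : Matrix (Fin n) (Fin n) ℝ)
    (y : Fin n → Fin (n - 1) → ℝ) (e : ∀ i : Fin n, Fin (n - 1) ≃ {j : Fin n // j ≠ i})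
    (hy : ∀ i k, y i k = A i (e i k).1) (hmono : ∀ i, Monotone (y i))
    (hQ : ∀ k l : Fin n, ((k : ℕ) + 1 : ℝ) ≤ (n : ℝ) / 2 →
      (n : ℝ) / 2 < ((l : ℕ) + 1 : ℝ) → sK n A y l < sK n A y k) :
    (⨆ x : {x : ℝ // 0 ≤ x}, ⨅ i, gershLower n A x.1 i) =
      ⨅ i, gershLower n A 0 i := by
  have h (x : {x : ℝ // 0 ≤ x}) := iInf_gershLower_le_iInf_gershLower_zero e hy hmono hQ x.2
  exact le_antisymm (ciSup_le h) (le_ciSup_of_le ⟨_, Set.forall_mem_range.2 h⟩ ⟨0, le_rfl⟩ le_rfl)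

/-- If `s_l < s_k` for every pair `(k,l)` with `1 ≤ k ≤ n/2 < l ≤ n` (i.e. the set `Q` of
the closed-form corollary is empty), then shifting gives no improvement:
`sup_{x≥0} min_i d_i(A,x) = min_i d_i(A,0)`. -/
theorem shifted_gershgorin_no_improvement (n : ℕ) (hn : 0 < n)
    (A : Matrix (Fin n) (Fin n) ℝ) (hA : A.IsSymm)
    (y : Fin n → Fin (n - 1) → ℝ) (e : ∀ i : Fin n, Fin (n - 1) ≃ {j : Fin n // j ≠ i})
    (hy : ∀ i k, y i k = A i (e i k).1) (hmono : ∀ i, Monotone (y i))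
    (hQ : ∀ k l : Fin n, ((k : ℕ) + 1 : ℝ) ≤ (n : ℝ) / 2 →
      (n : ℝ) / 2 < ((l : ℕ) + 1 : ℝ) → sK n A y l < sK n A y k) :
    (⨆ x : {x : ℝ // 0 ≤ x}, ⨅ i, gershLower n A x.1 i) =
      ⨅ i, gershLower n A 0 i :=
  shifted_gershgorin_no_improvement_general n A y e hy hmono hQ
end

section
/- Let A be an n×n real symmetric matrix (n ≥ 2) all of whose diagonal entries are equal to a common value q. Then for every real x ≥ 0 and every eigenvalue λ of A, one has λ ≥ min_{i≠j} ( q − x − (1/2)(R_i(A − x𝟙) + R_j(A − x𝟙)) ), where R_i(B) = Σ_{j≠i} |b_{ij}| is the i-th deleted row sum of absolute values. Equivalently, λ_min(A) ≥ sup_{x≥0} min_{i≠j} (1/2)(d_i(A,x) + d_j(A,x)). -/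
open Finset

namespace Matrix

variable {ι : Type*} [Fintype ι] [DecidableEq ι]

section NormedField

variable {K : Type*} [NormedField K] {A : Matrix ι ι K} {μ : K} {v : ι → K}

theorem norm_diag_sub_mul_le_of_mulVec_eq (hv : A *ᵥ v = μ • v) (i : ι) {b : ℝ}
    (hb : ∀ k ∈ univ.erase i, ‖v k‖ ≤ b) :
    ‖A i i - μ‖ * ‖v i‖ ≤ (∑ k ∈ univ.erase i, ‖A i k‖) * b := by
  have hrow : (A i i - μ) * v i = -∑ k ∈ univ.erase i, A i k * v k := by
    have h := congrFun hv i
    simp only [mulVec, dotProduct, Pi.smul_apply, smul_eq_mul] at h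
    rw [← add_sum_erase _ _ (mem_univ i)] at h
    linear_combination h
  calc ‖A i i - μ‖ * ‖v i‖ = ‖∑ k ∈ univ.erase i, A i k * v k‖ := by
        rw [← norm_mul, hrow, norm_neg]
    _ ≤ ∑ k ∈ univ.erase i, ‖A i k‖ * b := by
        refine (norm_sum_le _ _).trans (sum_le_sum fun k hk => ?_)
        rw [norm_mul]
        exact mul_le_mul_of_nonneg_left (hb k hk) (norm_nonneg _)
    _ = (∑ k ∈ univ.erase i, ‖A i k‖) * b := (sum_mul ..).symm

theorem eigenvalue_mem_cassini_oval [Nontrivial ι]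
    (hμ : Module.End.HasEigenvalue (Matrix.toLin' A) μ) :
    ∃ i j, i ≠ j ∧ ‖A i i - μ‖ * ‖A j j - μ‖ ≤
      (∑ k ∈ univ.erase i, ‖A i k‖) * ∑ k ∈ univ.erase j, ‖A j k‖ := by
  obtain ⟨v, hv, hv0⟩ := hμ.exists_hasEigenvector
  have hAv : A *ᵥ v = μ • v := Module.End.mem_eigenspace_iff.mp hv
  -- `i` carries the largest and `j` the second largest entry of the eigenvector in norm.
  obtain ⟨i, -, hi⟩ := exists_max_image univ (fun k => ‖v k‖) univ_nonempty
  obtain ⟨j, hj, hji⟩ := exists_max_image (univ.erase i) (fun k => ‖v k‖)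
    univ_nontrivial.erase_nonempty
  refine ⟨i, j, (ne_of_mem_erase hj).symm, ?_⟩
  have hvi : 0 < ‖v i‖ := by
    obtain ⟨k, hk⟩ := Function.ne_iff.mp hv0
    exact (norm_pos_iff.mpr hk).trans_le (hi k (mem_univ k))
  have h₁ := norm_diag_sub_mul_le_of_mulVec_eq hAv i hji
  have h₂ := norm_diag_sub_mul_le_of_mulVec_eq hAv j fun k _ => hi k (mem_univ k)
  rcases (norm_nonneg (v j)).eq_or_lt with hvj | hvj
  · rw [← hvj, mul_zero] at h₁
    have : ‖A i i - μ‖ = 0 := le_antisymm (nonpos_of_mul_nonpos_left h₁ hvi) (norm_nonneg _)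
    rw [this, zero_mul]
    exact mul_nonneg (sum_nonneg fun _ _ => norm_nonneg _) (sum_nonneg fun _ _ => norm_nonneg _)
  · have := mul_le_mul h₁ h₂ (by positivity) (by positivity)
    refine le_of_mul_le_mul_right ?_ (mul_pos hvj hvi)
    linarith

end NormedField

theorem le_eigenvalue_of_diag_eq [Nontrivial ι] {A : Matrix ι ι ℝ} {c m μ : ℝ}
    (hμ : μ ∈ spectrum ℝ A) (hd : ∀ i, A i i = c)
    (hm : ∀ i j, i ≠ j →
      m ≤ c - (1 / 2) * ((∑ k ∈ univ.erase i, |A i k|) + ∑ k ∈ univ.erase j, |A j k|)) :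
    m ≤ μ := by
  rw [← spectrum_toLin', ← Module.End.hasEigenvalue_iff_mem_spectrum] at hμ
  obtain ⟨i, j, hij, h⟩ := eigenvalue_mem_cassini_oval hμ
  simp only [Real.norm_eq_abs, hd] at h
  set Ri := ∑ k ∈ univ.erase i, |A i k|
  set Rj := ∑ k ∈ univ.erase j, |A j k|
  have hRi : 0 ≤ Ri := sum_nonneg fun _ _ => abs_nonneg _
  have hRj : 0 ≤ Rj := sum_nonneg fun _ _ => abs_nonneg _
  -- `|c - μ|² ≤ Ri Rj ≤ ((Ri + Rj) / 2)²` by AM-GM.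
  have : |c - μ| ≤ (1 / 2) * (Ri + Rj) := by
    refine abs_le_of_sq_le_sq ?_ (by positivity)
    rw [abs_mul_abs_self] at h
    nlinarith [sq_nonneg (Ri - Rj)]
  linarith [hm i j hij, le_abs_self (c - μ)]

theorem IsHermitian.posSemidef_sub_algebraMap_iff {A : Matrix ι ι ℝ} (hA : A.IsHermitian)
    (m : ℝ) : (A - algebraMap ℝ _ m).PosSemidef ↔ ∀ μ ∈ spectrum ℝ A, m ≤ μ := by
  have hm : (algebraMap ℝ (Matrix ι ι ℝ) m).IsHermitian := by
    rw [algebraMap_eq_diagonal]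
    exact isHermitian_diagonal _
  rw [posSemidef_iff_isHermitian_and_spectrum_nonneg, ← spectrum.sub_singleton_eq,
    and_iff_right (hA.sub hm), Set.sub_singleton, Set.image_subset_iff]
  exact forall₂_congr fun μ _ => sub_nonneg (a := μ)

theorem IsHermitian.le_eigenvalue_of_shifted_diag_eq [Nontrivial ι] {A : Matrix ι ι ℝ}
    (hA : A.IsHermitian) {q x m μ : ℝ} (hd : ∀ i, A i i = q) (hx : 0 ≤ x)
    (hm : ∀ i j, i ≠ j →
      m ≤ q - x - (1 / 2) * ((∑ k ∈ univ.erase i, |A i k - x|) + ∑ k ∈ univ.erase j, |A j k - x|))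
    (hμ : μ ∈ spectrum ℝ A) :
    m ≤ μ := by
  set J : Matrix ι ι ℝ := vecMulVec 1 1
  have hJ : (x • J).PosSemidef := by
    simpa [J] using (posSemidef_vecMulVec_self_star (1 : ι → ℝ)).smul hx
  have hB : ∀ i k, (A - x • J) i k = A i k - x := by simp [J]
  have hBm : (A - x • J - algebraMap ℝ _ m).PosSemidef := by
    refine ((hA.sub hJ.isHermitian).posSemidef_sub_algebraMap_iff m).2 fun ν hν => ?_
    refine le_eigenvalue_of_diag_eq hν (c := q - x) (by simp [hB, hd]) fun i j hij => ?_
    simpa only [hB] using hm i j hij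
  have hAm : (A - algebraMap ℝ _ m).PosSemidef := by
    convert hBm.add hJ using 1
    abel
  exact (hA.posSemidef_sub_algebraMap_iff m).1 hAm μ hμ

end Matrix

/-- Averaged-Gershgorin relaxation of the shifted Brauer bound for a symmetric matrix all of
whose diagonal entries equal `q`: for every `x ≥ 0`, every eigenvalue `μ` of `A` satisfies
`μ ≥ min_{i≠j} (q − x − (R_i(A−x𝟙) + R_j(A−x𝟙))/2)`, where `R_i(A−x𝟙) = Σ_{j≠i} |a_{ij} − x|`;
equivalently, `λ_min(A) ≥ sup_{x≥0} min_{i≠j} (d_i(A,x) + d_j(A,x))/2`. -/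
theorem averaged_shifted_gershgorin (n : ℕ) (hn : 2 ≤ n)
    (A : Matrix (Fin n) (Fin n) ℝ) (hA : A.IsHermitian)
    (q : ℝ) (hq : ∀ i, A i i = q) :
    (∀ x : ℝ, 0 ≤ x → ∀ μ ∈ spectrum ℝ A,
      (⨅ p : {p : Fin n × Fin n // p.1 ≠ p.2},
        (q - x - (1 / 2) * ((∑ j ∈ Finset.univ.erase p.1.1, |A p.1.1 j - x|) +
          (∑ j ∈ Finset.univ.erase p.1.2, |A p.1.2 j - x|)))) ≤ μ) ∧
    (⨆ x : {x : ℝ // 0 ≤ x}, ⨅ p : {p : Fin n × Fin n // p.1 ≠ p.2},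
        (1 / 2) * (gershLower n A x.1 p.1.1 + gershLower n A x.1 p.1.2)) ≤
      ⨅ i, hA.eigenvalues i := by
  have : Nontrivial (Fin n) := Fin.nontrivial_iff_two_le.mpr hn
  have : Nonempty {x : ℝ // 0 ≤ x} := ⟨⟨0, le_rfl⟩⟩
  refine ⟨fun x hx μ hμ => ?_, ciSup_le fun x => le_ciInf fun k => ?_⟩
  · refine hA.le_eigenvalue_of_shifted_diag_eq hq hx (fun i j hij => ?_) hμ
    exact ciInf_le (Set.finite_range _).bddBelow
      (⟨(i, j), hij⟩ : {p : Fin n × Fin n // p.1 ≠ p.2})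
  · refine hA.le_eigenvalue_of_shifted_diag_eq hq x.2 (fun i j hij => ?_)
      (hA.eigenvalues_mem_spectrum_real k)
    refine (ciInf_le (Set.finite_range _).bddBelow
      (⟨(i, j), hij⟩ : {p : Fin n × Fin n // p.1 ≠ p.2})).trans_eq ?_
    simp only [gershLower, hq]
    ring
end

section
/- Let G be a simple graph on n vertices with adjacency matrix A(G). Then every eigenvalue λ of A(G) satisfies all three inequalities: λ ≥ −Δ(G), λ ≥ −n/2, and λ ≥ δ(G) − n; that is, λ_min(A(G)) ≥ max(−Δ(G), −n/2, δ(G) − n). -/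
/-!
Each bound is a lower bound `c · vᵀv ≤ vᵀAv` for all `v`, which an eigenvector turns into `c ≤ μ`.

* Over each edge `2|vᵢvⱼ| ≤ vᵢ² + vⱼ²`, so `|vᵀAv| ≤ ∑ deg(i) vᵢ² ≤ Δ vᵀv`.
* `A(G) + A(Gᶜ) = J - I`, so `vᵀAv ≥ -vᵀv - vᵀA(Gᶜ)v`, and the previous bound for `Gᶜ`, whose
  degrees are `n - 1 - deg(i) ≤ n - 1 - δ`, gives `vᵀAv ≥ (δ - n) vᵀv`.
* Writing `v = v⁺ - v⁻`, only products `vᵢvⱼ < 0` can make `vᵀAv` negative, so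
  `vᵀAv ≥ -2 (∑ v⁺)(∑ v⁻)`. Cauchy–Schwarz on the disjoint supports `P`, `N` of `v⁺`, `v⁻` gives
  `(∑ v⁺)² ≤ |P| ‖v⁺‖²` and `(∑ v⁻)² ≤ |N| ‖v⁻‖²`, and AM–GM with `|P| + |N| ≤ n` yields
  `4 (∑ v⁺)(∑ v⁻) ≤ n vᵀv`.
-/

open Finset Matrix

theorem sq_eq_posPart_sq_add_negPart_sq {α : Type*} [Ring α] [LinearOrder α]
    [IsStrictOrderedRing α] (a : α) : a ^ 2 = a⁺ ^ 2 + a⁻ ^ 2 := by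
  rcases le_total a 0 with h | h
  · simp [posPart_eq_zero.mpr h, negPart_eq_neg.mpr h]
  · simp [posPart_eq_self.mpr h, negPart_eq_zero.mpr h]

theorem sq_sum_le_card_filter_ne_zero_mul_sum_sq {ι : Type*} [Fintype ι] (f : ι → ℝ) :
    (∑ i, f i) ^ 2 ≤ #{i | f i ≠ 0} * ∑ i, f i ^ 2 := by
  rw [← sum_filter_ne_zero]
  refine sq_sum_le_card_mul_sum_sq.trans (mul_le_mul_of_nonneg_left ?_ (Nat.cast_nonneg _))
  exact sum_le_sum_of_subset_of_nonneg (subset_univ _) fun i _ _ => sq_nonneg (f i)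

theorem four_mul_mul_le_add_mul_add {a b k m s t : ℝ} (ha : 0 ≤ a) (hb : 0 ≤ b) (hk : 0 ≤ k)
    (hm : 0 ≤ m) (hs : 0 ≤ s) (ht : 0 ≤ t) (has : a ^ 2 ≤ k * s) (hbt : b ^ 2 ≤ m * t) :
    4 * (a * b) ≤ (k + m) * (s + t) := by
  have hkm : 4 * (k * m) ≤ (k + m) ^ 2 := by nlinarith [sq_nonneg (k - m)]
  have hst : 4 * (s * t) ≤ (s + t) ^ 2 := by nlinarith [sq_nonneg (s - t)]
  have hsq : (4 * (a * b)) ^ 2 ≤ ((k + m) * (s + t)) ^ 2 := calc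
    (4 * (a * b)) ^ 2 = 16 * (a ^ 2 * b ^ 2) := by ring
    _ ≤ 16 * ((k * s) * (m * t)) := by gcongr
    _ = (4 * (k * m)) * (4 * (s * t)) := by ring
    _ ≤ (k + m) ^ 2 * (s + t) ^ 2 := by gcongr
    _ = ((k + m) * (s + t)) ^ 2 := by ring
  exact (pow_le_pow_iff_left₀ (by positivity) (by positivity) two_ne_zero).mp hsq

theorem four_mul_sum_posPart_mul_sum_negPart_le {ι : Type*} [Fintype ι] (v : ι → ℝ) :
    4 * ((∑ i, (v i)⁺) * ∑ i, (v i)⁻) ≤ Fintype.card ι * ∑ i, v i ^ 2 := by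
  classical
  have hdisj : Disjoint ({i | (v i)⁺ ≠ 0} : Finset ι) ({i | (v i)⁻ ≠ 0} : Finset ι) := by
    refine disjoint_filter.mpr fun i _ hpos hneg => ?_
    rw [ne_eq, posPart_eq_zero, not_le] at hpos
    rw [ne_eq, negPart_eq_zero, not_le] at hneg
    exact lt_asymm hpos hneg
  have hcard : (#{i | (v i)⁺ ≠ 0} : ℝ) + #{i | (v i)⁻ ≠ 0} ≤ Fintype.card ι := by
    exact_mod_cast (card_union_of_disjoint hdisj).symm.trans_le (card_le_univ _)
  have hsq : ∑ i, v i ^ 2 = ∑ i, (v i)⁺ ^ 2 + ∑ i, (v i)⁻ ^ 2 := by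
    simp only [← sum_add_distrib, ← sq_eq_posPart_sq_add_negPart_sq]
  rw [hsq]
  refine (four_mul_mul_le_add_mul_add (sum_nonneg fun i _ => posPart_nonneg _)
    (sum_nonneg fun i _ => negPart_nonneg _) (Nat.cast_nonneg _) (Nat.cast_nonneg _)
    (sum_nonneg fun i _ => sq_nonneg _) (sum_nonneg fun i _ => sq_nonneg _)
    (sq_sum_le_card_filter_ne_zero_mul_sum_sq _)
    (sq_sum_le_card_filter_ne_zero_mul_sum_sq _)).trans ?_
  gcongr

theorem sum_mul_sq_le_mul_dotProduct_self {ι : Type*} [Fintype ι] {d : ι → ℝ} {c : ℝ}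
    (hd : ∀ i, d i ≤ c) (v : ι → ℝ) : ∑ i, d i * v i ^ 2 ≤ c * (v ⬝ᵥ v) := by
  rw [dotProduct, mul_sum]
  exact sum_le_sum fun i _ => sq (v i) ▸ mul_le_mul_of_nonneg_right (hd i) (sq_nonneg _)

theorem le_of_mem_spectrum_of_forall_le_dotProduct_mulVec {ι : Type*} [Fintype ι]
    [DecidableEq ι] {A : Matrix ι ι ℝ} {μ c : ℝ} (hμ : μ ∈ spectrum ℝ A)
    (h : ∀ v, c * (v ⬝ᵥ v) ≤ v ⬝ᵥ A *ᵥ v) : c ≤ μ := by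
  rw [← Matrix.spectrum_toLin', ← Module.End.hasEigenvalue_iff_mem_spectrum] at hμ
  obtain ⟨v, hv⟩ := hμ.exists_hasEigenvector
  have hAv : A *ᵥ v = μ • v := by rw [← Matrix.toLin'_apply, hv.apply_eq_smul]
  have hpos : 0 < v ⬝ᵥ v :=
    lt_of_le_of_ne' (Fintype.sum_nonneg fun i => mul_self_nonneg (v i))
      (dotProduct_self_eq_zero.not.mpr hv.2)
  have hc := h v
  rw [hAv, dotProduct_smul, smul_eq_mul] at hc
  exact le_of_mul_le_mul_right hc hpos

namespace SimpleGraph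

variable {V : Type*} [Fintype V] (G : SimpleGraph V) [DecidableRel G.Adj]

theorem sum_sum_adj_ite_eq_sum_degree_mul (f : V → ℝ) :
    ∑ i, ∑ j, (if G.Adj i j then f i else 0) = ∑ i, (G.degree i : ℝ) * f i := by
  refine sum_congr rfl fun i _ => ?_
  rw [← sum_filter, sum_const, ← neighborFinset_eq_filter, card_neighborFinset_eq_degree,
    nsmul_eq_mul]

theorem abs_dotProduct_adjMatrix_mulVec_le (v : V → ℝ) :
    |v ⬝ᵥ G.adjMatrix ℝ *ᵥ v| ≤ ∑ i, (G.degree i : ℝ) * v i ^ 2 := by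
  have hsymm : ∑ i, ∑ j, (if G.Adj i j then v j ^ 2 else 0)
      = ∑ i, ∑ j, (if G.Adj i j then v i ^ 2 else 0) := by
    rw [sum_comm]
    simp only [G.adj_comm]
  calc |v ⬝ᵥ G.adjMatrix ℝ *ᵥ v| = |∑ i, ∑ j, if G.Adj i j then v i * v j else 0| := by
        rw [dotProduct_mulVec_adjMatrix]
    _ ≤ ∑ i, ∑ j,
          ((if G.Adj i j then v i ^ 2 else 0) / 2 + (if G.Adj i j then v j ^ 2 else 0) / 2) := by
        refine (abs_sum_le_sum_abs _ _).trans (sum_le_sum fun i _ => ?_)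
        refine (abs_sum_le_sum_abs _ _).trans (sum_le_sum fun j _ => ?_)
        split_ifs
        · rw [abs_le]
          constructor <;> nlinarith [sq_nonneg (v i - v j), sq_nonneg (v i + v j)]
        · simp
    _ = ∑ i, (G.degree i : ℝ) * v i ^ 2 := by
        simp only [sum_add_distrib, ← sum_div, hsymm, sum_sum_adj_ite_eq_sum_degree_mul]
        ring

theorem neg_maxDegree_mul_le_dotProduct_adjMatrix_mulVec (v : V → ℝ) :
    -(G.maxDegree : ℝ) * (v ⬝ᵥ v) ≤ v ⬝ᵥ G.adjMatrix ℝ *ᵥ v := by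
  have hdeg := sum_mul_sq_le_mul_dotProduct_self
    (fun i => (mod_cast G.degree_le_maxDegree i : (G.degree i : ℝ) ≤ G.maxDegree)) v
  linarith [neg_abs_le (v ⬝ᵥ G.adjMatrix ℝ *ᵥ v), G.abs_dotProduct_adjMatrix_mulVec_le v]

theorem minDegree_sub_card_mul_le_dotProduct_adjMatrix_mulVec [DecidableEq V] (v : V → ℝ) :
    ((G.minDegree : ℝ) - Fintype.card V) * (v ⬝ᵥ v) ≤ v ⬝ᵥ G.adjMatrix ℝ *ᵥ v := by
  have hsplit : v ⬝ᵥ G.adjMatrix ℝ *ᵥ v + v ⬝ᵥ Gᶜ.adjMatrix ℝ *ᵥ v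
      = (∑ i, v i) ^ 2 - v ⬝ᵥ v := by
    rw [← dotProduct_add, ← add_mulVec,
      IsCompl.adjMatrix_add_adjMatrix_eq_adjMatrix_completeGraph ℝ isCompl_compl,
      adjMatrix_completeGraph_eq_of_one_sub_one, sub_mulVec, one_mulVec, dotProduct_sub]
    simp [dotProduct, mulVec, sq, sum_mul]
  have hdeg : ∀ i, (Gᶜ.degree i : ℝ) ≤ Fintype.card V - 1 - G.minDegree := by
    intro i
    have hlt := G.degree_lt_card_verts i
    have hmin := G.minDegree_le_degree i
    rw [degree_compl, Nat.cast_sub (by omega), Nat.cast_sub (by omega)]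
    push_cast
    linarith [(mod_cast hmin : (G.minDegree : ℝ) ≤ G.degree i)]
  have hcompl : v ⬝ᵥ Gᶜ.adjMatrix ℝ *ᵥ v ≤ (Fintype.card V - 1 - G.minDegree) * (v ⬝ᵥ v) := by
    exact (le_abs_self _).trans ((Gᶜ.abs_dotProduct_adjMatrix_mulVec_le v).trans
      (sum_mul_sq_le_mul_dotProduct_self hdeg v))
  nlinarith [sq_nonneg (∑ i, v i)]

theorem neg_two_mul_sum_posPart_mul_sum_negPart_le_dotProduct_adjMatrix_mulVec (v : V → ℝ) :
    -(2 * ((∑ i, (v i)⁺) * ∑ i, (v i)⁻)) ≤ v ⬝ᵥ G.adjMatrix ℝ *ᵥ v := by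
  have hswap : ∑ i, ∑ j, (v i)⁻ * (v j)⁺ = ∑ i, ∑ j, (v i)⁺ * (v j)⁻ := by
    rw [sum_comm]
    simp only [mul_comm]
  rw [dotProduct_mulVec_adjMatrix]
  calc -(2 * ((∑ i, (v i)⁺) * ∑ i, (v i)⁻))
        = ∑ i, ∑ j, -((v i)⁺ * (v j)⁻ + (v i)⁻ * (v j)⁺) := by
        simp only [neg_add, sum_add_distrib, sum_neg_distrib, hswap, sum_mul_sum]
        ring
    _ ≤ ∑ i, ∑ j, if G.Adj i j then v i * v j else 0 := by
        refine sum_le_sum fun i _ => sum_le_sum fun j _ => ?_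
        have hcross := add_nonneg (mul_nonneg (posPart_nonneg (v i)) (negPart_nonneg (v j)))
          (mul_nonneg (negPart_nonneg (v i)) (posPart_nonneg (v j)))
        split_ifs
        · conv_rhs => rw [← posPart_sub_negPart (v i), ← posPart_sub_negPart (v j)]
          nlinarith [mul_nonneg (posPart_nonneg (v i)) (posPart_nonneg (v j)),
            mul_nonneg (negPart_nonneg (v i)) (negPart_nonneg (v j))]
        · linarith

theorem neg_card_div_two_mul_le_dotProduct_adjMatrix_mulVec (v : V → ℝ) :
    -(Fintype.card V / 2 : ℝ) * (v ⬝ᵥ v) ≤ v ⬝ᵥ G.adjMatrix ℝ *ᵥ v := by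
  rw [show v ⬝ᵥ v = ∑ i, v i ^ 2 by simp only [dotProduct, sq]]
  linarith [four_mul_sum_posPart_mul_sum_negPart_le v,
    G.neg_two_mul_sum_posPart_mul_sum_negPart_le_dotProduct_adjMatrix_mulVec v]

end SimpleGraph

/-- Eigenvalue bounds for the adjacency matrix of a simple graph: every eigenvalue `μ`
of `A(G)` satisfies `μ ≥ −Δ(G)`, `μ ≥ −n/2`, and `μ ≥ δ(G) − n`; that is,
`λ_min(A(G)) ≥ max(−Δ(G), −n/2, δ(G) − n)`. -/
theorem adjacency_eigenvalue_lower_bounds (n : ℕ) (G : SimpleGraph (Fin n))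
    [DecidableRel G.Adj] (μ : ℝ) (hμ : μ ∈ spectrum ℝ (G.adjMatrix ℝ)) :
    -(G.maxDegree : ℝ) ≤ μ ∧ -((n : ℝ) / 2) ≤ μ ∧ (G.minDegree : ℝ) - n ≤ μ := by
  refine ⟨?_, ?_, ?_⟩ <;> refine le_of_mem_spectrum_of_forall_le_dotProduct_mulVec hμ fun v => ?_
  · exact G.neg_maxDegree_mul_le_dotProduct_adjMatrix_mulVec v
  · simpa using G.neg_card_div_two_mul_le_dotProduct_adjMatrix_mulVec v
  · simpa using G.minDegree_sub_card_mul_le_dotProduct_adjMatrix_mulVec v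
end

section
/- Let G be a simple graph on n vertices with adjacency matrix A = A(G). Then the shifted Gershgorin lower bound for A is exactly sup_{x≥0} min_{1≤i≤n} d_i(A,x) = max(−Δ(G), −n/2, δ(G) − n), where d_i(A,x) = −x − Σ_{j≠i} |a_{ij} − x|. In particular: the value is −Δ(G) when Δ(G) < n/2; it is −n/2 when δ(G) ≤ n/2 ≤ Δ(G); and it is δ(G) − n when δ(G) > n/2. -/
/-!
For `x ≥ 0` the `i`-th shifted row value of `A(G)` depends only on the degree of `i`:
it is `deg i · (x − |1 − x|) − n x`, affine in the degree with a slope that is negative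
for `x < 1/2` and positive for `x > 1/2`. So for each `x` the minimum over rows is
attained at a vertex of maximum or of minimum degree, and the supremum over `x` of the
resulting piecewise-linear function is attained at one of its breakpoints `x = 0, 1/2, 1`,
where it takes the values `−Δ`, `−n/2` and `δ − n`.
-/

theorem min_mul_sub_abs_sub_le_max {n δ Δ x : ℝ} (hn : 0 ≤ n) (hx : 0 ≤ x) :
    min (Δ * (x - |1 - x|) - n * x) (δ * (x - |1 - x|) - n * x) ≤
      max (-Δ) (max (-(n / 2)) (δ - n)) := by
  rcases le_or_gt x (1 / 2) with hx₁ | hx₁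
  · refine (min_le_left _ _).trans ?_
    rw [abs_of_nonneg (by linarith)]
    rcases le_or_gt (2 * Δ) n with hΔ | hΔ
    · exact le_max_of_le_left (by nlinarith)
    · exact le_max_of_le_right (le_max_of_le_left (by nlinarith))
  · refine (min_le_right _ _).trans (le_max_of_le_right ?_)
    rcases le_or_gt x 1 with hx₂ | hx₂
    · rw [abs_of_nonneg (by linarith)]
      rcases le_or_gt (2 * δ) n with hδ | hδ
      · exact le_max_of_le_left (by nlinarith)
      · exact le_max_of_le_right (by nlinarith)
    · rw [abs_of_nonpos (by linarith)]
      exact le_max_of_le_right (by nlinarith)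

theorem max_neg_max_eq_cases {n δ Δ : ℝ} (hδΔ : δ ≤ Δ) :
    (Δ < n / 2 → max (-Δ) (max (-(n / 2)) (δ - n)) = -Δ) ∧
    (δ ≤ n / 2 ∧ n / 2 ≤ Δ → max (-Δ) (max (-(n / 2)) (δ - n)) = -(n / 2)) ∧
    (n / 2 < δ → max (-Δ) (max (-(n / 2)) (δ - n)) = δ - n) := by
  refine ⟨fun h => ?_, fun h => ?_, fun h => ?_⟩ <;>
    simp only [max_def] <;> split_ifs <;> linarith

namespace SimpleGraph

variable {n : ℕ} (G : SimpleGraph (Fin n)) [DecidableRel G.Adj]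

theorem gershLower_adjMatrix {x : ℝ} (hx : 0 ≤ x) (i : Fin n) :
    gershLower n (G.adjMatrix ℝ) x i = G.degree i * (x - |1 - x|) - n * x := by
  -- `A i j ∈ {0, 1}`, and the diagonal term `|A i i - x| = x` fits the same formula.
  have hrow : ∀ j, |G.adjMatrix ℝ i j - x| = x + G.adjMatrix ℝ i j * (|1 - x| - x) := by
    intro j
    by_cases h : G.Adj i j <;> simp [h, abs_of_nonneg hx]
  have hsum : ∑ j, |G.adjMatrix ℝ i j - x| = n * x + G.degree i * (|1 - x| - x) := by
    simp only [hrow, Finset.sum_add_distrib, Finset.sum_const, Finset.card_univ,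
      Fintype.card_fin, nsmul_eq_mul]
    rw [← adjMatrix_mulVec_const_apply (G := G)]
    rfl
  rw [gershLower, Finset.sum_erase_eq_sub (Finset.mem_univ i), hsum, hrow, adjMatrix_apply,
    if_neg (G.irrefl (v := i))]
  ring

theorem iInf_gershLower_adjMatrix_le [Nonempty (Fin n)] {x : ℝ} (hx : 0 ≤ x) :
    ⨅ i, gershLower n (G.adjMatrix ℝ) x i ≤
      max (-(G.maxDegree : ℝ)) (max (-((n : ℝ) / 2)) ((G.minDegree : ℝ) - n)) := by
  obtain ⟨u, hu⟩ := G.exists_maximal_degree_vertex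
  obtain ⟨v, hv⟩ := G.exists_minimal_degree_vertex
  have hbdd : BddBelow (Set.range (gershLower n (G.adjMatrix ℝ) x)) :=
    (Set.finite_range _).bddBelow
  refine (le_min (ciInf_le hbdd u) (ciInf_le hbdd v)).trans ?_
  rw [G.gershLower_adjMatrix hx, G.gershLower_adjMatrix hx, ← hu, ← hv]
  exact min_mul_sub_abs_sub_le_max n.cast_nonneg hx

theorem neg_maxDegree_le_gershLower_adjMatrix_zero (i : Fin n) :
    -(G.maxDegree : ℝ) ≤ gershLower n (G.adjMatrix ℝ) 0 i := by
  have hdeg : (G.degree i : ℝ) ≤ G.maxDegree := by exact_mod_cast G.degree_le_maxDegree i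
  rw [G.gershLower_adjMatrix le_rfl]
  norm_num [hdeg]

theorem gershLower_adjMatrix_half (i : Fin n) :
    gershLower n (G.adjMatrix ℝ) (1 / 2) i = -((n : ℝ) / 2) := by
  rw [G.gershLower_adjMatrix (by norm_num)]
  norm_num [div_eq_mul_one_div]

theorem minDegree_sub_le_gershLower_adjMatrix_one (i : Fin n) :
    (G.minDegree : ℝ) - n ≤ gershLower n (G.adjMatrix ℝ) 1 i := by
  have hdeg : (G.minDegree : ℝ) ≤ G.degree i := by exact_mod_cast G.minDegree_le_degree i
  rw [G.gershLower_adjMatrix zero_le_one]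
  norm_num [hdeg]

end SimpleGraph

/-- The shifted Gershgorin lower bound for the adjacency matrix of a simple graph on `n`
vertices is exactly `max(−Δ(G), −n/2, δ(G) − n)`; in particular it equals `−Δ(G)` when
`Δ(G) < n/2`, equals `−n/2` when `δ(G) ≤ n/2 ≤ Δ(G)`, and equals `δ(G) − n` when
`δ(G) > n/2`. -/
theorem adjacency_shifted_gershgorin (n : ℕ) (hn : 0 < n) (G : SimpleGraph (Fin n))
    [DecidableRel G.Adj] :
    ((⨆ x : {x : ℝ // 0 ≤ x}, ⨅ i, gershLower n (G.adjMatrix ℝ) x.1 i) =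
      max (-(G.maxDegree : ℝ)) (max (-((n : ℝ) / 2)) ((G.minDegree : ℝ) - n))) ∧
    ((G.maxDegree : ℝ) < (n : ℝ) / 2 →
      (⨆ x : {x : ℝ // 0 ≤ x}, ⨅ i, gershLower n (G.adjMatrix ℝ) x.1 i) =
        -(G.maxDegree : ℝ)) ∧
    ((G.minDegree : ℝ) ≤ (n : ℝ) / 2 ∧ (n : ℝ) / 2 ≤ (G.maxDegree : ℝ) →
      (⨆ x : {x : ℝ // 0 ≤ x}, ⨅ i, gershLower n (G.adjMatrix ℝ) x.1 i) =
        -((n : ℝ) / 2)) ∧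
    ((n : ℝ) / 2 < (G.minDegree : ℝ) →
      (⨆ x : {x : ℝ // 0 ≤ x}, ⨅ i, gershLower n (G.adjMatrix ℝ) x.1 i) =
        (G.minDegree : ℝ) - n) := by
  have : Nonempty (Fin n) := Fin.pos_iff_nonempty.1 hn
  have upper (x : {x : ℝ // 0 ≤ x}) := G.iInf_gershLower_adjMatrix_le x.2
  have hbdd : BddAbove (Set.range fun x : {x : ℝ // 0 ≤ x} =>
      ⨅ i, gershLower n (G.adjMatrix ℝ) x.1 i) :=
    ⟨_, Set.forall_mem_range.2 upper⟩
  have key : (⨆ x : {x : ℝ // 0 ≤ x}, ⨅ i, gershLower n (G.adjMatrix ℝ) x.1 i) =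
      max (-(G.maxDegree : ℝ)) (max (-((n : ℝ) / 2)) ((G.minDegree : ℝ) - n)) := by
    refine le_antisymm (ciSup_le upper) (max_le ?_ (max_le ?_ ?_))
    · exact le_ciSup_of_le hbdd ⟨0, le_rfl⟩
        (le_ciInf G.neg_maxDegree_le_gershLower_adjMatrix_zero)
    · exact le_ciSup_of_le hbdd ⟨1 / 2, by norm_num⟩
        (le_ciInf fun i => (G.gershLower_adjMatrix_half i).ge)
    · exact le_ciSup_of_le hbdd ⟨1, zero_le_one⟩
        (le_ciInf G.minDegree_sub_le_gershLower_adjMatrix_one)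
  rw [key]
  exact ⟨rfl, max_neg_max_eq_cases (by exact_mod_cast G.minDegree_le_maxDegree)⟩
end

section
/- Let G be a simple graph on n ≥ 2 vertices with adjacency matrix A(G). Then every eigenvalue λ of A(G) satisfies λ ≥ (δ(G) + δ²(G))/2 − n, where δ(G) is the minimum degree and δ²(G) the second-smallest degree of G. (This is the averaged shifted Gershgorin bound at shift x = 1, using the average of the two smallest degrees.) -/
/-!
Since `1 + A(G) + A(Gᶜ) = J` and the all-ones matrix `J` is positive semidefinite,
`A(G) ⪰ -(1 + λ_max(A(Gᶜ)))`. Brauer's Cassini-oval theorem places every eigenvalue `ν` of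
`A(Gᶜ)` in an oval `ν² ≤ d'ᵢ d'ⱼ` for two distinct vertices `i ≠ j`, where `d' = n - 1 - d` are
the degrees in `Gᶜ`; hence `ν ≤ n - 1 - (dᵢ + dⱼ)/2 ≤ n - 1 - (δ + δ²)/2`.
-/

/-- The second-smallest degree `δ²(G) = min_{i≠j} max(deg i, deg j)` of a graph. -/
noncomputable def secondMinDegree (n : ℕ) (G : SimpleGraph (Fin n)) [DecidableRel G.Adj] : ℕ :=
  ⨅ p : {p : Fin n × Fin n // p.1 ≠ p.2}, max (G.degree p.1.1) (G.degree p.1.2)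

open Finset Matrix

namespace Matrix

variable {K ι : Type*} [NormedField K] [Fintype ι] [DecidableEq ι]

theorem norm_diag_sub_mul_norm_le_of_mulVec_eq_smul {A : Matrix ι ι K} {μ : K} {v : ι → K}
    (hv : A *ᵥ v = μ • v) (i : ι) :
    ‖A i i - μ‖ * ‖v i‖ ≤ ∑ k ∈ univ.erase i, ‖A i k‖ * ‖v k‖ := by
  have hrow : (A i i - μ) * v i = -∑ k ∈ univ.erase i, A i k * v k := by
    have hi := congrFun hv i
    rw [mulVec, dotProduct, ← add_sum_erase _ _ (mem_univ i), Pi.smul_apply, smul_eq_mul] at hi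
    linear_combination hi
  calc ‖A i i - μ‖ * ‖v i‖ = ‖∑ k ∈ univ.erase i, A i k * v k‖ := by
        rw [← norm_mul, hrow, norm_neg]
    _ ≤ ∑ k ∈ univ.erase i, ‖A i k * v k‖ := norm_sum_le _ _
    _ = ∑ k ∈ univ.erase i, ‖A i k‖ * ‖v k‖ := by simp_rw [norm_mul]

theorem exists_ne_norm_diag_sub_mul_le_of_hasEigenvalue [Nontrivial ι] {A : Matrix ι ι K} {μ : K}
    (hμ : Module.End.HasEigenvalue (toLin' A) μ) :
    ∃ i j, i ≠ j ∧ ‖A i i - μ‖ * ‖A j j - μ‖ ≤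
      (∑ k ∈ univ.erase i, ‖A i k‖) * ∑ k ∈ univ.erase j, ‖A j k‖ := by
  obtain ⟨v, hv⟩ := hμ.exists_hasEigenvector
  have hAv : A *ᵥ v = μ • v := by simpa using hv.apply_eq_smul
  obtain ⟨i, -, hi⟩ := exists_max_image univ (‖v ·‖) univ_nonempty
  obtain ⟨j, hji, hj⟩ := exists_max_image (univ.erase i) (‖v ·‖) univ_nontrivial.erase_nonempty
  refine ⟨i, j, (ne_of_mem_erase hji).symm, ?_⟩
  have hvi : 0 < ‖v i‖ := by
    obtain ⟨k, hk⟩ := Function.ne_iff.1 hv.2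
    exact (norm_pos_iff.2 hk).trans_le (hi k (mem_univ k))
  have hrow_i : ‖A i i - μ‖ * ‖v i‖ ≤ (∑ k ∈ univ.erase i, ‖A i k‖) * ‖v j‖ := by
    refine (norm_diag_sub_mul_norm_le_of_mulVec_eq_smul hAv i).trans ?_
    rw [sum_mul]
    gcongr with k hk
    exact hj k hk
  have hrow_j : ‖A j j - μ‖ * ‖v j‖ ≤ (∑ k ∈ univ.erase j, ‖A j k‖) * ‖v i‖ := by
    refine (norm_diag_sub_mul_norm_le_of_mulVec_eq_smul hAv j).trans ?_
    rw [sum_mul]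
    gcongr with k
    exact hi k (mem_univ k)
  rcases (norm_nonneg (v j)).eq_or_lt with hvj | hvj
  · have : ‖A i i - μ‖ = 0 := by
      rw [← hvj, mul_zero] at hrow_i
      exact le_antisymm (nonpos_of_mul_nonpos_left hrow_i hvi) (norm_nonneg _)
    rw [this, zero_mul]
    positivity
  · refine le_of_mul_le_mul_right ?_ (mul_pos hvi hvj)
    calc ‖A i i - μ‖ * ‖A j j - μ‖ * (‖v i‖ * ‖v j‖)
        = (‖A i i - μ‖ * ‖v i‖) * (‖A j j - μ‖ * ‖v j‖) := by ring
      _ ≤ ((∑ k ∈ univ.erase i, ‖A i k‖) * ‖v j‖) * ((∑ k ∈ univ.erase j, ‖A j k‖) * ‖v i‖) :=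
          mul_le_mul hrow_i hrow_j (by positivity) (by positivity)
      _ = _ := by ring

end Matrix

namespace SimpleGraph

variable {V : Type*} [Fintype V] [DecidableEq V] (G : SimpleGraph V) [DecidableRel G.Adj]

theorem sum_erase_norm_adjMatrix_eq_degree (i : V) :
    ∑ k ∈ univ.erase i, ‖G.adjMatrix ℝ i k‖ = G.degree i := by
  rw [sum_erase _ (by simp)]
  simp [adjMatrix_apply, apply_ite, sum_boole, ← card_neighborFinset_eq_degree,
    neighborFinset_eq_filter]

theorem exists_ne_two_mul_le_degree_add_degree [Nontrivial V] {ν : ℝ}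
    (hν : ν ∈ spectrum ℝ (G.adjMatrix ℝ)) :
    ∃ i j, i ≠ j ∧ 2 * ν ≤ G.degree i + G.degree j := by
  rw [← spectrum_toLin', ← Module.End.hasEigenvalue_iff_mem_spectrum] at hν
  obtain ⟨i, j, hij, h⟩ := exists_ne_norm_diag_sub_mul_le_of_hasEigenvalue hν
  refine ⟨i, j, hij, ?_⟩
  rw [sum_erase_norm_adjMatrix_eq_degree, sum_erase_norm_adjMatrix_eq_degree] at h
  simp only [adjMatrix_apply, G.irrefl, if_false, zero_sub, norm_neg, Real.norm_eq_abs,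
    abs_mul_abs_self] at h
  nlinarith [sq_nonneg ((G.degree i : ℝ) - G.degree j)]

open scoped MatrixOrder in
theorem div_two_sub_card_le_of_mem_spectrum_adjMatrix [Nontrivial V] {c : ℝ}
    (hc : ∀ i j, i ≠ j → c ≤ G.degree i + G.degree j) {μ : ℝ}
    (hμ : μ ∈ spectrum ℝ (G.adjMatrix ℝ)) :
    c / 2 - Fintype.card V ≤ μ := by
  have hcompl : Gᶜ.adjMatrix ℝ ≤ algebraMap ℝ _ (Fintype.card V - 1 - c / 2) := by
    refine (le_algebraMap_iff_spectrum_le (Gᶜ.isHermitian_adjMatrix ℝ).isSelfAdjoint).2 ?_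
    intro ν hν
    obtain ⟨i, j, hij, h⟩ := Gᶜ.exists_ne_two_mul_le_degree_add_degree hν
    have hdeg (v : V) : (Gᶜ.degree v : ℝ) = Fintype.card V - 1 - G.degree v := by
      rw [degree_compl, Nat.cast_sub (Nat.le_sub_one_of_lt (G.degree_lt_card_verts v)),
        Nat.cast_sub Fintype.card_pos]
      simp
    rw [hdeg, hdeg] at h
    linarith [hc i j hij]
  have hJ : (of 1 : Matrix V V ℝ).PosSemidef := by
    convert posSemidef_vecMulVec_self_star (1 : V → ℝ)
    ext
    simp [vecMulVec]
  have hdecomp : G.adjMatrix ℝ - algebraMap ℝ _ (c / 2 - Fintype.card V) =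
      of 1 + (algebraMap ℝ _ (Fintype.card V - 1 - c / 2) - Gᶜ.adjMatrix ℝ) := by
    rw [← G.one_add_adjMatrix_add_compl_adjMatrix_eq_of_one ℝ, compl_adjMatrix_eq_adjMatrix_compl]
    simp only [map_sub, map_natCast, map_one]
    abel
  have hA : algebraMap ℝ _ (c / 2 - Fintype.card V) ≤ G.adjMatrix ℝ := by
    rw [Matrix.le_iff, hdecomp]
    exact hJ.add hcompl
  exact (algebraMap_le_iff_le_spectrum (G.isHermitian_adjMatrix ℝ).isSelfAdjoint).1 hA μ hμ

end SimpleGraph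

theorem minDegree_add_secondMinDegree_le {n : ℕ} (G : SimpleGraph (Fin n)) [DecidableRel G.Adj]
    {i j : Fin n} (hij : i ≠ j) : G.minDegree + secondMinDegree n G ≤ G.degree i + G.degree j := by
  rw [← min_add_max (G.degree i)]
  exact add_le_add (le_min (G.minDegree_le_degree i) (G.minDegree_le_degree j))
    (ciInf_le' _ (⟨(i, j), hij⟩ : {p : Fin n × Fin n // p.1 ≠ p.2}))

/-- Averaged shifted Gershgorin bound at shift x = 1: every eigenvalue `μ` of the adjacency
matrix of a simple graph on `n ≥ 2` vertices satisfies `μ ≥ (δ(G) + δ²(G))/2 − n`. -/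
theorem adjacency_average_bottom_two_degree_bound (n : ℕ) (hn : 2 ≤ n)
    (G : SimpleGraph (Fin n)) [DecidableRel G.Adj]
    (μ : ℝ) (hμ : μ ∈ spectrum ℝ (G.adjMatrix ℝ)) :
    ((G.minDegree : ℝ) + (secondMinDegree n G : ℝ)) / 2 - n ≤ μ := by
  have : Nontrivial (Fin n) := Fin.nontrivial_iff_two_le.2 hn
  simpa using G.div_two_sub_card_le_of_mem_spectrum_adjMatrix
    (fun i j hij => by exact_mod_cast minDegree_add_secondMinDegree_le G hij) hμ
end

section
/- Let m ≥ 1 and let y_1,…,y_m be nonnegative reals with Σ_{k=1}^m y_k = ρ. Then for every real x ≥ 0, ρ − x − Σ_{k=1}^m |y_k − x| ≤ ρ(m−1)/m, so that sup_{x≥0}(ρ − x − Σ_k |y_k − x|) ≤ ρ(m−1)/m. Moreover, if y_k = ρ/m for every k, then taking x = ρ/m attains equality, so the supremum equals ρ(m−1)/m in that case. (In other words, among all vectors of m nonnegative off-diagonal entries with fixed row sum ρ, the evenly spread vector maximizes the shifted Gershgorin diagonal dominance, with maximal value ρ(m−1)/m.) -/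
/-! The sum `Σ_k |y_k - x|` is at least `|ρ - m x|` by the triangle inequality, and the
piecewise linear function `x ↦ ρ - x - |ρ - m x|` peaks at its kink `x = ρ / m`, with value
`ρ (m - 1) / m`. -/

open Finset

theorem abs_sum_sub_card_mul_le_sum_abs_sub {ι : Type*} [Fintype ι] (y : ι → ℝ) (x : ℝ) :
    |∑ k, y k - Fintype.card ι * x| ≤ ∑ k, |y k - x| := by
  have h : ∑ k, (y k - x) = ∑ k, y k - Fintype.card ι * x := by
    simp [sum_sub_distrib]
  exact h ▸ abs_sum_le_sum_abs _ _

theorem sub_sub_abs_sub_mul_le {m : ℝ} (hm : 1 ≤ m) (ρ x : ℝ) :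
    ρ - x - |ρ - m * x| ≤ ρ * (m - 1) / m := by
  rw [le_div_iff₀ (by linarith)]
  rcases le_total (m * x) ρ with h | h
  · rw [abs_of_nonneg (by linarith)]
    nlinarith
  · rw [abs_of_nonpos (by linarith)]
    nlinarith

theorem sub_sub_sum_abs_sub_le {ι : Type*} [Fintype ι] (hι : 1 ≤ Fintype.card ι)
    {y : ι → ℝ} {ρ : ℝ} (hsum : ∑ k, y k = ρ) (x : ℝ) :
    ρ - x - ∑ k, |y k - x| ≤ ρ * ((Fintype.card ι : ℝ) - 1) / Fintype.card ι := by
  have htriangle := abs_sum_sub_card_mul_le_sum_abs_sub y x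
  rw [hsum] at htriangle
  linarith [sub_sub_abs_sub_mul_le (m := Fintype.card ι) (by exact_mod_cast hι) ρ x]

/-- Among vectors of `m` nonnegative off-diagonal entries with fixed sum `ρ`, the shifted
diagonal dominance `ρ − x − Σ_k |y_k − x|` is at most `ρ(m−1)/m` for every shift `x ≥ 0`,
so its supremum over `x ≥ 0` is at most `ρ(m−1)/m`; and if all entries equal `ρ/m`, the
shift `x = ρ/m` attains this value, so the supremum equals `ρ(m−1)/m` in that case. -/
theorem spread_maximizes_shifted_dominance (m : ℕ) (hm : 1 ≤ m)
    (y : Fin m → ℝ) (hy : ∀ k, 0 ≤ y k) (ρ : ℝ) (hsum : ∑ k, y k = ρ) :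
    (∀ x : ℝ, 0 ≤ x → ρ - x - ∑ k, |y k - x| ≤ ρ * ((m : ℝ) - 1) / m) ∧
    ((⨆ x : {x : ℝ // 0 ≤ x}, (ρ - x.1 - ∑ k, |y k - x.1|)) ≤ ρ * ((m : ℝ) - 1) / m) ∧
    ((∀ k, y k = ρ / m) →
      (ρ - ρ / m - ∑ k, |y k - ρ / m| = ρ * ((m : ℝ) - 1) / m) ∧
      (⨆ x : {x : ℝ // 0 ≤ x}, (ρ - x.1 - ∑ k, |y k - x.1|)) = ρ * ((m : ℝ) - 1) / m) := by
  have hbound (x : ℝ) : ρ - x - ∑ k, |y k - x| ≤ ρ * ((m : ℝ) - 1) / m := by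
    simpa using sub_sub_sum_abs_sub_le (by simpa using hm) hsum x
  have hsup : (⨆ x : {x : ℝ // 0 ≤ x}, (ρ - x.1 - ∑ k, |y k - x.1|)) ≤
      ρ * ((m : ℝ) - 1) / m :=
    ciSup_le fun x => hbound x.1
  refine ⟨fun x _ => hbound x, hsup, fun hspread => ?_⟩
  have hval : ρ - ρ / m - ∑ k, |y k - ρ / m| = ρ * ((m : ℝ) - 1) / m := by
    have hm0 : (m : ℝ) ≠ 0 := Nat.cast_ne_zero.2 (by omega)
    simp only [hspread, sub_self, abs_zero, sum_const_zero]
    field_simp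
    ring
  have hρ : 0 ≤ ρ / m := div_nonneg (hsum ▸ sum_nonneg fun k _ => hy k) m.cast_nonneg
  have hbdd : BddAbove (Set.range fun x : {x : ℝ // 0 ≤ x} => ρ - x.1 - ∑ k, |y k - x.1|) :=
    ⟨_, Set.forall_mem_range.2 fun x => hbound x.1⟩
  exact ⟨hval, hsup.antisymm (le_ciSup_of_le hbdd ⟨ρ / m, hρ⟩ hval.ge)⟩
end
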